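/- arXiv:2206.00810 — 12 statements merged into one kernel-verified Lean document; each statement's English description precedes it below -/
import Mathlib

section
/- Pessimistic value iteration suboptimality bound (deterministic core of Lemma C.1): In a finite-horizon tabular MDP, suppose the given penalty functions dominate the Bellman error of the surrogate targets, i.e. |(T_h V̂_{h+1})(s,a) − f_h(s,a)| ≤ Γ_h(s,a) for all h ∈ {1,…,H}, s ∈ S, a ∈ A (with V̂, Q̂, π̂ defined from f, Γ as in the context). Then for every policy π and every state s, V^π_1(s) − V^{π̂}_1(s) ≤ 2 · Σ_{h=1}^H E_π[ Γ_h(s_h,a_h) | s_1 = s ]. -/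
open Finset

/-- Bellman operator `(T_h V)(s,a) = r_h(s,a) + Σ_{s'} P_h(s'|s,a) V(s')`. -/
noncomputable def bellmanT {S A : Type*} [Fintype S]
    (P : ℕ → S → A → S → ℝ) (r : ℕ → S → A → ℝ)
    (h : ℕ) (V : S → ℝ) (s : S) (a : A) : ℝ :=
  r h s a + ∑ s' : S, P h s a s' * V s'

/-- Value function with `k` steps remaining, starting at time `h`:
`VpiAux k h s = E_π[Σ_{t=h}^{h+k-1} r_t | s_h = s]`. -/
noncomputable def VpiAux {S A : Type*} [Fintype S] [Fintype A]
    (P : ℕ → S → A → S → ℝ) (r : ℕ → S → A → ℝ) (pol : ℕ → S → A → ℝ) :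
    ℕ → ℕ → S → ℝ
  | 0, _, _ => 0
  | k + 1, h, s => ∑ a : A, pol h s a *
      (r h s a + ∑ s' : S, P h s a s' * VpiAux P r pol k (h + 1) s')

/-- The value function `V^π_h` in the MDP with horizon `H`. -/
noncomputable def Vpi {S A : Type*} [Fintype S] [Fintype A]
    (P : ℕ → S → A → S → ℝ) (r : ℕ → S → A → ℝ) (pol : ℕ → S → A → ℝ)
    (H h : ℕ) (s : S) : ℝ :=
  VpiAux P r pol (H + 1 - h) h s

/-- State occupancy `k` steps after starting from state `s` at time `t`. -/
noncomputable def occAux {S A : Type*} [Fintype S] [Fintype A] [DecidableEq S]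
    (P : ℕ → S → A → S → ℝ) (pol : ℕ → S → A → ℝ) (t : ℕ) (s : S) :
    ℕ → S → ℝ
  | 0, s' => if s' = s then 1 else 0
  | k + 1, s'' => ∑ s' : S, ∑ a : A,
      occAux P pol t s k s' * pol (t + k) s' a * P (t + k) s' a s''

/-- Trajectory expectation `E_π[ g(s_h,a_h) | s_t = s ]`. -/
noncomputable def trajE {S A : Type*} [Fintype S] [Fintype A] [DecidableEq S]
    (P : ℕ → S → A → S → ℝ) (pol : ℕ → S → A → ℝ) (t : ℕ) (s : S)
    (h : ℕ) (g : S → A → ℝ) : ℝ :=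
  ∑ s' : S, ∑ a : A, occAux P pol t s (h - t) s' * pol h s' a * g s' a

/-- A deterministic policy, viewed as a randomized policy (point mass). -/
def detPol {S A : Type*} [DecidableEq A] (pd : ℕ → S → A) : ℕ → S → A → ℝ :=
  fun h s a => if a = pd h s then 1 else 0

section PviAux

set_option linter.unusedSectionVars false

variable {S A : Type*} [Fintype S] [Fintype A] [DecidableEq S] [DecidableEq A]

/-- Expected sum of `g` over the next `k` steps, in first-step recursive form. -/
noncomputable def ESum (P : ℕ → S → A → S → ℝ) (pol : ℕ → S → A → ℝ)
    (g : ℕ → S → A → ℝ) : ℕ → ℕ → S → ℝ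
  | 0, _, _ => 0
  | k + 1, t, s => ∑ a : A, pol t s a *
      (g t s a + ∑ s' : S, P t s a s' * ESum P pol g k (t + 1) s')

lemma sum4 (f : S → A → A → S → ℝ) :
    (∑ s' : S, ∑ a' : A, ∑ a : A, ∑ s1 : S, f s' a' a s1)
      = ∑ a : A, ∑ s1 : S, ∑ s' : S, ∑ a' : A, f s' a' a s1 :=
  calc (∑ s' : S, ∑ a' : A, ∑ a : A, ∑ s1 : S, f s' a' a s1)
      = ∑ s' : S, ∑ a : A, ∑ a' : A, ∑ s1 : S, f s' a' a s1 :=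
        Finset.sum_congr rfl fun _ _ => Finset.sum_comm
    _ = ∑ a : A, ∑ s' : S, ∑ a' : A, ∑ s1 : S, f s' a' a s1 := Finset.sum_comm
    _ = ∑ a : A, ∑ s' : S, ∑ s1 : S, ∑ a' : A, f s' a' a s1 :=
        Finset.sum_congr rfl fun _ _ => Finset.sum_congr rfl fun _ _ => Finset.sum_comm
    _ = ∑ a : A, ∑ s1 : S, ∑ s' : S, ∑ a' : A, f s' a' a s1 :=
        Finset.sum_congr rfl fun _ _ => Finset.sum_comm

lemma occAux_succ_left (P : ℕ → S → A → S → ℝ) (pol : ℕ → S → A → ℝ) (t : ℕ) (s : S) :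
    ∀ (k : ℕ) (s'' : S), occAux P pol t s (k+1) s'' =
      ∑ a : A, pol t s a * ∑ s1 : S, P t s a s1 * occAux P pol (t+1) s1 k s'' := by
  intro k
  induction k with
  | zero =>
    intro s''
    simp [occAux, ite_mul, Finset.sum_ite_eq', mul_ite, mul_comm]
  | succ k ih =>
    intro s''
    show (∑ s' : S, ∑ a' : A,
        occAux P pol t s (k+1) s' * pol (t + (k+1)) s' a' * P (t + (k+1)) s' a' s'') = _
    calc (∑ s' : S, ∑ a' : A,
        occAux P pol t s (k+1) s' * pol (t + (k+1)) s' a' * P (t + (k+1)) s' a' s'')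
        = ∑ s' : S, ∑ a' : A, (∑ a : A, pol t s a * ∑ s1 : S,
            P t s a s1 * occAux P pol (t+1) s1 k s') * pol (t + (k+1)) s' a' *
            P (t + (k+1)) s' a' s'' := by
          refine Finset.sum_congr rfl fun s' _ => Finset.sum_congr rfl fun a' _ => ?_
          rw [ih s']
      _ = ∑ a : A, pol t s a * ∑ s1 : S, P t s a s1 *
            ∑ s' : S, ∑ a' : A, occAux P pol (t+1) s1 k s' * pol (t + (k+1)) s' a' *
              P (t + (k+1)) s' a' s'' := by
          simp only [Finset.sum_mul, Finset.mul_sum]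
          rw [sum4]
          refine Finset.sum_congr rfl fun _ _ => Finset.sum_congr rfl fun _ _ =>
            Finset.sum_congr rfl fun _ _ => Finset.sum_congr rfl fun _ _ => by ring
      _ = ∑ a : A, pol t s a * ∑ s1 : S, P t s a s1 * occAux P pol (t+1) s1 (k+1) s'' := by
          refine Finset.sum_congr rfl fun a _ => ?_
          congr 1
          refine Finset.sum_congr rfl fun s1 _ => ?_
          congr 1
          show _ = (∑ s' : S, ∑ a' : A, occAux P pol (t+1) s1 k s' *
            pol ((t+1) + k) s' a' * P ((t+1) + k) s' a' s'')
          have h2 : (t+1) + k = t + (k+1) := by omega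
          rw [h2]

lemma trajE_self (P : ℕ → S → A → S → ℝ) (pol : ℕ → S → A → ℝ) (t : ℕ) (s : S)
    (g : S → A → ℝ) : trajE P pol t s t g = ∑ a : A, pol t s a * g s a := by
  simp [trajE, occAux, ite_mul, Finset.sum_ite_eq']

lemma trajE_step (P : ℕ → S → A → S → ℝ) (pol : ℕ → S → A → ℝ) (t : ℕ) (s : S)
    (h : ℕ) (ht : t + 1 ≤ h) (g : S → A → ℝ) :
    trajE P pol t s h g = ∑ a : A, pol t s a * ∑ s1 : S, P t s a s1 *
      trajE P pol (t+1) s1 h g := by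
  unfold trajE
  have hk : h - t = (h - (t+1)) + 1 := by omega
  rw [hk]
  simp only [occAux_succ_left]
  simp only [Finset.sum_mul, Finset.mul_sum]
  rw [sum4]
  refine Finset.sum_congr rfl fun _ _ => Finset.sum_congr rfl fun _ _ =>
    Finset.sum_congr rfl fun _ _ => Finset.sum_congr rfl fun _ _ => by ring

lemma trajE_two (P : ℕ → S → A → S → ℝ) (pol : ℕ → S → A → ℝ) (t : ℕ) (s : S)
    (h : ℕ) (g : S → A → ℝ) :
    trajE P pol t s h (fun s' a => 2 * g s' a) = 2 * trajE P pol t s h g := by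
  unfold trajE
  rw [Finset.mul_sum]
  refine Finset.sum_congr rfl fun s' _ => ?_
  rw [Finset.mul_sum]
  exact Finset.sum_congr rfl fun a _ => by ring

lemma ESum_eq_sum (P : ℕ → S → A → S → ℝ) (pol : ℕ → S → A → ℝ)
    (g : ℕ → S → A → ℝ) :
    ∀ (k t : ℕ) (s : S), ESum P pol g k t s =
      ∑ j ∈ Finset.range k, trajE P pol t s (t + j) (fun s' a => g (t + j) s' a) := by
  intro k
  induction k with
  | zero => intro t s; simp [ESum]
  | succ k ih =>
    intro t s
    rw [Finset.sum_range_succ']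
    have h0 : trajE P pol t s (t + 0) (fun s' a => g (t + 0) s' a)
        = ∑ a : A, pol t s a * g t s a := by
      simpa using trajE_self P pol t s (fun s' a => g t s' a)
    rw [h0]
    have hstep : ∀ j ∈ Finset.range k,
        trajE P pol t s (t + (j + 1)) (fun s' a => g (t + (j + 1)) s' a)
          = ∑ a : A, pol t s a * ∑ s1 : S, P t s a s1 *
              trajE P pol (t+1) s1 (t + (j + 1)) (fun s' a => g (t + (j + 1)) s' a) :=
      fun j _ => trajE_step P pol t s (t + (j + 1)) (by omega) _
    rw [Finset.sum_congr rfl hstep]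
    show ESum P pol g (k+1) t s = _
    have hE : ESum P pol g (k+1) t s = ∑ a : A, pol t s a *
        (g t s a + ∑ s' : S, P t s a s' * ESum P pol g k (t + 1) s') := rfl
    rw [hE]
    have hrw : ∀ a : A, pol t s a * (g t s a + ∑ s' : S, P t s a s' *
          ESum P pol g k (t + 1) s')
        = pol t s a * g t s a + ∑ j ∈ Finset.range k, pol t s a * ∑ s' : S, P t s a s' *
            trajE P pol (t+1) s' (t + (j + 1)) (fun s'' a' => g (t + (j + 1)) s'' a') := by
      intro a
      rw [mul_add]
      congr 1
      have : ∀ s' : S, P t s a s' * ESum P pol g k (t + 1) s'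
          = ∑ j ∈ Finset.range k, P t s a s' *
              trajE P pol (t+1) s' (t + (j + 1)) (fun s'' a' => g (t + (j + 1)) s'' a') := by
        intro s'
        rw [ih (t+1) s', Finset.mul_sum]
        refine Finset.sum_congr rfl fun j _ => ?_
        have h3 : t + 1 + j = t + (j + 1) := by omega
        rw [h3]
      rw [Finset.sum_congr rfl fun s' _ => this s', Finset.sum_comm, Finset.mul_sum]
    rw [Finset.sum_congr rfl fun a _ => hrw a, Finset.sum_add_distrib, Finset.sum_comm]
    ring

end PviAux

/-- Pessimistic value iteration suboptimality bound (deterministic core of Lemma C.1):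
if the penalties `Γ_h` dominate the Bellman error of the surrogate targets `f_h`, then
for every policy `π` and state `s`,
`V^π_1(s) − V^{π̂}_1(s) ≤ 2 Σ_{h=1}^H E_π[Γ_h(s_h,a_h) | s_1 = s]`. -/
theorem pessimistic_value_iteration_suboptimality
    {S A : Type*} [Fintype S] [Fintype A] [Nonempty S] [Nonempty A]
    [DecidableEq S] [DecidableEq A]
    (H : ℕ) (hH : 1 ≤ H)
    (P : ℕ → S → A → S → ℝ)
    (hPnn : ∀ h ∈ Icc 1 H, ∀ s a s', 0 ≤ P h s a s')
    (hPsum : ∀ h ∈ Icc 1 H, ∀ s a, ∑ s' : S, P h s a s' = 1)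
    (r : ℕ → S → A → ℝ)
    (hrnn : ∀ h ∈ Icc 1 H, ∀ s a, 0 ≤ r h s a)
    (hr1 : ∀ h ∈ Icc 1 H, ∀ s a, r h s a ≤ 1)
    (f Γ : ℕ → S → A → ℝ)
    (Qbar Qhat : ℕ → S → A → ℝ) (Vhat : ℕ → S → ℝ) (pd : ℕ → S → A)
    (hQbar : ∀ h ∈ Icc 1 H, ∀ s a, Qbar h s a = f h s a - Γ h s a)
    (hQhat : ∀ h ∈ Icc 1 H, ∀ s a,
      Qhat h s a = min (max (Qbar h s a) 0) ((H : ℝ) - h + 1))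
    (hVtop : ∀ s, Vhat (H + 1) s = 0)
    (hVhat : ∀ h ∈ Icc 1 H, ∀ s,
      Vhat h s = univ.sup' univ_nonempty (fun a => Qhat h s a))
    (hGreedy : ∀ h ∈ Icc 1 H, ∀ s a, Qhat h s a ≤ Qhat h s (pd h s))
    (hBell : ∀ h ∈ Icc 1 H, ∀ s a,
      |bellmanT P r h (Vhat (h + 1)) s a - f h s a| ≤ Γ h s a) :
    ∀ pol : ℕ → S → A → ℝ,
      (∀ h ∈ Icc 1 H, ∀ s a, 0 ≤ pol h s a) →
      (∀ h ∈ Icc 1 H, ∀ s, ∑ a : A, pol h s a = 1) →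
      ∀ s : S,
        Vpi P r pol H 1 s - Vpi P r (detPol pd) H 1 s ≤
          2 * ∑ h ∈ Icc 1 H, trajE P pol 1 s h (fun s' a => Γ h s' a) := by
  intro pol hpolnn hpol1 s0
  -- basic facts
  have hGnn : ∀ h ∈ Icc 1 H, ∀ s a, 0 ≤ Γ h s a := fun h hm s a =>
    le_trans (abs_nonneg _) (hBell h hm s a)
  -- Qhat bounds
  have hQnn : ∀ h ∈ Icc 1 H, ∀ s a, 0 ≤ Qhat h s a := by
    intro h hm s a
    have hh := Finset.mem_Icc.mp hm
    rw [hQhat h hm s a]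
    refine le_min (le_max_right _ _) ?_
    have : (h : ℝ) ≤ (H : ℝ) := by exact_mod_cast hh.2
    linarith
  have hQub : ∀ h ∈ Icc 1 H, ∀ s a, Qhat h s a ≤ (H : ℝ) - h + 1 := by
    intro h hm s a
    rw [hQhat h hm s a]
    exact min_le_right _ _
  -- Vhat bounds
  have hVnn : ∀ h, 1 ≤ h → h ≤ H + 1 → ∀ s, 0 ≤ Vhat h s := by
    intro h h1 h2 s
    rcases eq_or_lt_of_le h2 with he | hl
    · rw [he, hVtop]
    · have hm : h ∈ Icc 1 H := Finset.mem_Icc.mpr ⟨h1, by omega⟩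
      rw [hVhat h hm s]
      obtain ⟨a⟩ := (inferInstance : Nonempty A)
      exact le_trans (hQnn h hm s a) (Finset.le_sup' _ (Finset.mem_univ a))
  have hVub : ∀ h, 1 ≤ h → h ≤ H + 1 → ∀ s, Vhat h s ≤ (H : ℝ) - h + 1 := by
    intro h h1 h2 s
    rcases eq_or_lt_of_le h2 with he | hl
    · rw [he, hVtop]
      push_cast
      linarith
    · have hm : h ∈ Icc 1 H := Finset.mem_Icc.mpr ⟨h1, by omega⟩
      rw [hVhat h hm s]
      exact Finset.sup'_le _ _ fun a _ => hQub h hm s a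
  -- Bellman target bounds
  have hT0 : ∀ h ∈ Icc 1 H, ∀ s a, 0 ≤ bellmanT P r h (Vhat (h + 1)) s a := by
    intro h hm s a
    have hh := Finset.mem_Icc.mp hm
    have : 0 ≤ ∑ s' : S, P h s a s' * Vhat (h + 1) s' :=
      Finset.sum_nonneg fun s' _ =>
        mul_nonneg (hPnn h hm s a s') (hVnn (h+1) (by omega) (by omega) s')
    have := hrnn h hm s a
    unfold bellmanT
    linarith
  have hTub : ∀ h ∈ Icc 1 H, ∀ s a,
      bellmanT P r h (Vhat (h + 1)) s a ≤ (H : ℝ) - h + 1 := by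
    intro h hm s a
    have hh := Finset.mem_Icc.mp hm
    have hsum : ∑ s' : S, P h s a s' * Vhat (h + 1) s' ≤ (H : ℝ) - h := by
      calc ∑ s' : S, P h s a s' * Vhat (h + 1) s'
          ≤ ∑ s' : S, P h s a s' * ((H : ℝ) - h) := by
            refine Finset.sum_le_sum fun s' _ =>
              mul_le_mul_of_nonneg_left ?_ (hPnn h hm s a s')
            have := hVub (h+1) (by omega) (by omega) s'
            push_cast at this ⊢
            linarith
        _ = (H : ℝ) - h := by rw [← Finset.sum_mul, hPsum h hm s a, one_mul]
    have := hr1 h hm s a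
    unfold bellmanT
    linarith
  -- Q̂ ≤ T V̂ ≤ Q̂ + 2Γ
  have hQleT : ∀ h ∈ Icc 1 H, ∀ s a,
      Qhat h s a ≤ bellmanT P r h (Vhat (h + 1)) s a := by
    intro h hm s a
    rw [hQhat h hm s a]
    refine le_trans (min_le_left _ _) (max_le ?_ (hT0 h hm s a))
    have hb := (abs_le.mp (hBell h hm s a)).1
    rw [hQbar h hm s a]
    linarith
  have hTleQ : ∀ h ∈ Icc 1 H, ∀ s a,
      bellmanT P r h (Vhat (h + 1)) s a ≤ Qhat h s a + 2 * Γ h s a := by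
    intro h hm s a
    have hb := (abs_le.mp (hBell h hm s a)).2
    have hG := hGnn h hm s a
    have hmin : min (Qbar h s a) ((H : ℝ) - h + 1) ≤ Qhat h s a := by
      rw [hQhat h hm s a]
      exact min_le_min (le_max_left _ _) le_rfl
    rcases le_total (Qbar h s a) ((H : ℝ) - h + 1) with hc | hc
    · rw [min_eq_left hc] at hmin
      rw [hQbar h hm s a] at hmin
      linarith
    · rw [min_eq_right hc] at hmin
      have := hTub h hm s a
      linarith
  -- key 1 : V^π bounded by V̂ + ESum of 2Γ
  have key1 : ∀ k h, h + k = H + 1 → 1 ≤ h → ∀ s,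
      VpiAux P r pol k h s ≤ Vhat h s +
        ESum P pol (fun t s' a => 2 * Γ t s' a) k h s := by
    intro k
    induction k with
    | zero =>
      intro h hk h1 s
      have : h = H + 1 := by omega
      rw [this, hVtop]
      simp [VpiAux, ESum]
    | succ k ih =>
      intro h hk h1 s
      have hm : h ∈ Icc 1 H := Finset.mem_Icc.mpr ⟨h1, by omega⟩
      calc VpiAux P r pol (k+1) h s
          = ∑ a : A, pol h s a *
              (r h s a + ∑ s' : S, P h s a s' * VpiAux P r pol k (h + 1) s') := rfl
        _ ≤ ∑ a : A, pol h s a * (Vhat h s + (2 * Γ h s a +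
              ∑ s' : S, P h s a s' *
                ESum P pol (fun t s' a => 2 * Γ t s' a) k (h + 1) s')) := by
            refine Finset.sum_le_sum fun a _ =>
              mul_le_mul_of_nonneg_left ?_ (hpolnn h hm s a)
            have hsplit : ∑ s' : S, P h s a s' * VpiAux P r pol k (h + 1) s'
                ≤ ∑ s' : S, P h s a s' * Vhat (h + 1) s' +
                  ∑ s' : S, P h s a s' *
                    ESum P pol (fun t s' a => 2 * Γ t s' a) k (h + 1) s' := by
              rw [← Finset.sum_add_distrib]
              refine Finset.sum_le_sum fun s' _ => ?_
              rw [← mul_add]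
              exact mul_le_mul_of_nonneg_left
                (ih (h + 1) (by omega) (by omega) s') (hPnn h hm s a s')
            have hTQ := hTleQ h hm s a
            have hQV : Qhat h s a ≤ Vhat h s := by
              rw [hVhat h hm s]
              exact Finset.le_sup' _ (Finset.mem_univ a)
            unfold bellmanT at hTQ
            linarith
        _ = Vhat h s + ESum P pol (fun t s' a => 2 * Γ t s' a) (k+1) h s := by
            have hE : ESum P pol (fun t s' a => 2 * Γ t s' a) (k+1) h s
                = ∑ a : A, pol h s a * (2 * Γ h s a + ∑ s' : S, P h s a s' *
                    ESum P pol (fun t s' a => 2 * Γ t s' a) k (h + 1) s') := rfl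
            rw [hE]
            simp only [mul_add]
            rw [Finset.sum_add_distrib, Finset.sum_add_distrib, ← Finset.sum_mul,
              hpol1 h hm s, one_mul]
  -- key 2 : V̂ ≤ V^π̂
  have key2 : ∀ k h, h + k = H + 1 → 1 ≤ h → ∀ s,
      Vhat h s ≤ VpiAux P r (detPol pd) k h s := by
    intro k
    induction k with
    | zero =>
      intro h hk h1 s
      have : h = H + 1 := by omega
      rw [this, hVtop]
      simp [VpiAux]
    | succ k ih =>
      intro h hk h1 s
      have hm : h ∈ Icc 1 H := Finset.mem_Icc.mpr ⟨h1, by omega⟩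
      have hdet : VpiAux P r (detPol pd) (k+1) h s
          = r h s (pd h s) + ∑ s' : S, P h s (pd h s) s' * VpiAux P r (detPol pd) k (h + 1) s' := by
        show (∑ a : A, detPol pd h s a *
          (r h s a + ∑ s' : S, P h s a s' * VpiAux P r (detPol pd) k (h + 1) s')) = _
        simp [detPol, ite_mul, Finset.sum_ite_eq']
      rw [hdet]
      have h1' : Vhat h s ≤ Qhat h s (pd h s) := by
        rw [hVhat h hm s]
        exact Finset.sup'_le _ _ fun a _ => hGreedy h hm s a
      have h2' := hQleT h hm s (pd h s)
      have h3' : ∑ s' : S, P h s (pd h s) s' * Vhat (h + 1) s'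
          ≤ ∑ s' : S, P h s (pd h s) s' * VpiAux P r (detPol pd) k (h + 1) s' :=
        Finset.sum_le_sum fun s' _ => mul_le_mul_of_nonneg_left
          (ih (h + 1) (by omega) (by omega) s') (hPnn h hm s (pd h s) s')
      unfold bellmanT at h2'
      linarith
  -- put things together
  have hH1 : H + 1 - 1 = H := by omega
  have hVpi1 : Vpi P r pol H 1 s0 = VpiAux P r pol H 1 s0 := by
    unfold Vpi
    rw [hH1]
  have hVpi2 : Vpi P r (detPol pd) H 1 s0 = VpiAux P r (detPol pd) H 1 s0 := by
    unfold Vpi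
    rw [hH1]
  have hk1 := key1 H 1 (by omega) le_rfl s0
  have hk2 := key2 H 1 (by omega) le_rfl s0
  have hEe : ESum P pol (fun t s' a => 2 * Γ t s' a) H 1 s0
      = 2 * ∑ h ∈ Icc 1 H, trajE P pol 1 s0 h (fun s' a => Γ h s' a) := by
    rw [ESum_eq_sum]
    rw [Finset.mul_sum]
    rw [← Finset.Ico_add_one_right_eq_Icc, Finset.sum_Ico_eq_sum_range]
    have hHr : H + 1 - 1 = H := by omega
    rw [hHr]
    refine Finset.sum_congr rfl fun j _ => ?_
    exact trajE_two P pol 1 s0 (1 + j) (fun s' a => Γ (1 + j) s' a)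
  rw [hVpi1, hVpi2]
  linarith
end

section
/- Bellman-error sandwich for pessimistic value iteration (Steps 1–2 of Lemma C.1): In a finite-horizon tabular MDP, suppose |(T_h V̂_{h+1})(s,a) − f_h(s,a)| ≤ Γ_h(s,a) for all h ∈ {1,…,H}, s ∈ S, a ∈ A (with V̂, Q̂ defined from f, Γ as in the context). Then for all h, s, a: 0 ≤ (T_h V̂_{h+1})(s,a) − Q̂_h(s,a) ≤ 2·Γ_h(s,a). -/
open Finset

/-- Bellman-error sandwich for pessimistic value iteration (Steps 1–2 of Lemma C.1):
if `|(T_h V̂_{h+1})(s,a) − f_h(s,a)| ≤ Γ_h(s,a)` for all `h ∈ {1,…,H}`, `s`, `a`, then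
`0 ≤ (T_h V̂_{h+1})(s,a) − Q̂_h(s,a) ≤ 2 Γ_h(s,a)`. -/
theorem bellman_error_sandwich
    {S A : Type*} [Fintype S] [Fintype A] [Nonempty S] [Nonempty A]
    (H : ℕ) (hH : 1 ≤ H)
    (P : ℕ → S → A → S → ℝ)
    (hPnn : ∀ h ∈ Icc 1 H, ∀ s a s', 0 ≤ P h s a s')
    (hPsum : ∀ h ∈ Icc 1 H, ∀ s a, ∑ s' : S, P h s a s' = 1)
    (r : ℕ → S → A → ℝ)
    (hrnn : ∀ h ∈ Icc 1 H, ∀ s a, 0 ≤ r h s a)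
    (hr1 : ∀ h ∈ Icc 1 H, ∀ s a, r h s a ≤ 1)
    (f Γ : ℕ → S → A → ℝ)
    (Qbar Qhat : ℕ → S → A → ℝ) (Vhat : ℕ → S → ℝ)
    (hQbar : ∀ h ∈ Icc 1 H, ∀ s a, Qbar h s a = f h s a - Γ h s a)
    (hQhat : ∀ h ∈ Icc 1 H, ∀ s a,
      Qhat h s a = min (max (Qbar h s a) 0) ((H : ℝ) - h + 1))
    (hVtop : ∀ s, Vhat (H + 1) s = 0)
    (hVhat : ∀ h ∈ Icc 1 H, ∀ s,
      Vhat h s = univ.sup' univ_nonempty (fun a => Qhat h s a))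
    (hBell : ∀ h ∈ Icc 1 H, ∀ s a,
      |bellmanT P r h (Vhat (h + 1)) s a - f h s a| ≤ Γ h s a) :
    ∀ h ∈ Icc 1 H, ∀ s a,
      0 ≤ bellmanT P r h (Vhat (h + 1)) s a - Qhat h s a ∧
        bellmanT P r h (Vhat (h + 1)) s a - Qhat h s a ≤ 2 * Γ h s a := by

  intro h hh s a
  have hh' := mem_Icc.mp hh
  obtain ⟨h1, h2⟩ := hh'
  -- bounds on Vhat (h+1)
  have hV : ∀ s', 0 ≤ Vhat (h+1) s' ∧ Vhat (h+1) s' ≤ (H:ℝ) - h := by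
    intro s'
    rcases eq_or_lt_of_le h2 with he | hl
    · rw [he, hVtop]
      refine ⟨le_refl 0, ?_⟩
      simp
    · have hm : h+1 ∈ Icc 1 H := mem_Icc.mpr ⟨by omega, by omega⟩
      rw [hVhat (h+1) hm]
      have hb : ∀ a, 0 ≤ Qhat (h+1) s' a ∧ Qhat (h+1) s' a ≤ (H:ℝ) - h := by
        intro a
        rw [hQhat (h+1) hm]
        have hcast : ((h:ℝ) + 1) ≤ (H:ℝ) := by exact_mod_cast hl
        have hnn : (0:ℝ) ≤ (H:ℝ) - ((h:ℕ)+1 : ℕ) + 1 := by push_cast; linarith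
        constructor
        · exact le_min (le_max_right _ _) hnn
        · refine (min_le_right _ _).trans ?_
          push_cast; linarith
      obtain ⟨a0⟩ := ‹Nonempty A›
      constructor
      · exact le_trans (hb a0).1 (le_sup' _ (mem_univ a0))
      · exact sup'_le _ _ (fun a _ => (hb a).2)
  set T := bellmanT P r h (Vhat (h+1)) s a with hTdef
  have hT0 : 0 ≤ T := by
    rw [hTdef]; unfold bellmanT
    have hs : 0 ≤ ∑ s' : S, P h s a s' * Vhat (h+1) s' :=
      Finset.sum_nonneg fun s' _ => mul_nonneg (hPnn h hh s a s') (hV s').1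
    linarith [hrnn h hh s a]
  have hTub : T ≤ (H:ℝ) - h + 1 := by
    rw [hTdef]; unfold bellmanT
    have hsum : ∑ s' : S, P h s a s' * Vhat (h+1) s' ≤ ∑ s' : S, P h s a s' * ((H:ℝ) - h) :=
      Finset.sum_le_sum fun s' _ => mul_le_mul_of_nonneg_left (hV s').2 (hPnn h hh s a s')
    rw [← Finset.sum_mul, hPsum h hh s a, one_mul] at hsum
    linarith [hr1 h hh s a]
  have habs := abs_le.mp (hBell h hh s a)
  have hG0 : 0 ≤ Γ h s a := le_trans (abs_nonneg _) (hBell h hh s a)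
  have hQb1 : Qbar h s a ≤ T := by rw [hQbar h hh s a]; linarith [habs.2]
  have hQb2 : T - 2 * Γ h s a ≤ Qbar h s a := by rw [hQbar h hh s a]; linarith [habs.1]
  rw [hQhat h hh s a]
  constructor
  · have : min (max (Qbar h s a) 0) ((H:ℝ) - h + 1) ≤ T :=
      (min_le_left _ _).trans (max_le hQb1 hT0)
    linarith
  · have : T - 2 * Γ h s a ≤ min (max (Qbar h s a) 0) ((H:ℝ) - h + 1) :=
      le_min (hQb2.trans (le_max_left _ _)) (by linarith)
    linarith
end

section
/- Validity of the private Bernstein-type pessimism (deterministic core of Lemma B.6): In a finite-horizon tabular MDP with |S| = S states, let ñ, P̃, Ṽ, Q̃, Γ, Q̄ be the private counts, private transition estimates and the backward-recursion quantities of DP-APVI as defined in the context, with constants E > 0, ι₀ > 0, C > 1. Assume that for every (h,s,a) with ñ(s,a) > 3E, |Σ_{s'} (P̃_h(s'|s,a) − P_h(s'|s,a)) Ṽ_{h+1}(s')| ≤ √(2·Var_{P̃_h(·|s,a)}(Ṽ_{h+1})·ι₀/(ñ(s,a)−E)) + 16·S·H·E·ι₀/ñ(s,a). Then for every (h,s,a)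 with ñ(s,a) > 3E: 0 ≤ (T_h Ṽ_{h+1})(s,a) − Q̄_h(s,a) ≤ 2·√(2·Var_{P̃_h(·|s,a)}(Ṽ_{h+1})·ι₀/(ñ(s,a)−E)) + 32·S·H·E·ι₀/ñ(s,a). -/
open Finset

/-- Variance of `V` under the distribution `q` on a finite type. -/
noncomputable def distVar {ι : Type*} [Fintype ι] (q V : ι → ℝ) : ℝ :=
  ∑ i, q i * V i ^ 2 - (∑ i, q i * V i) ^ 2

/-- Validity of the private Bernstein-type pessimism (deterministic core of Lemma B.6):
with the DP-APVI quantities `ñ, P̃, Ṽ, Q̃, Γ, Q̄`, if the private Bernstein bound on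
`|(P̃_h − P_h)Ṽ_{h+1}(s,a)|` holds whenever `ñ(s,a) > 3E`, then for all such `(h,s,a)`,
`0 ≤ (T_h Ṽ_{h+1})(s,a) − Q̄_h(s,a)
   ≤ 2√(2 Var_{P̃}(Ṽ_{h+1}) ι₀/(ñ−E)) + 32·S·H·E·ι₀/ñ`. -/
theorem dp_apvi_pessimism_valid
    {S A : Type*} [Fintype S] [Fintype A] [Nonempty S] [Nonempty A]
    (H : ℕ) (hH : 1 ≤ H)
    (P : ℕ → S → A → S → ℝ)
    (hPnn : ∀ h ∈ Icc 1 H, ∀ s a s', 0 ≤ P h s a s')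
    (hPsum : ∀ h ∈ Icc 1 H, ∀ s a, ∑ s' : S, P h s a s' = 1)
    (r : ℕ → S → A → ℝ)
    (hrnn : ∀ h ∈ Icc 1 H, ∀ s a, 0 ≤ r h s a)
    (hr1 : ∀ h ∈ Icc 1 H, ∀ s a, r h s a ≤ 1)
    -- private transition estimates: probability distributions on S
    (Pt : ℕ → S → A → S → ℝ)
    (hPtnn : ∀ h ∈ Icc 1 H, ∀ s a s', 0 ≤ Pt h s a s')
    (hPtsum : ∀ h ∈ Icc 1 H, ∀ s a, ∑ s' : S, Pt h s a s' = 1)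
    -- private counts and constants
    (ntil : ℕ → S → A → ℝ) (E ι₀ C : ℝ)
    (hE : 0 < E) (hι₀ : 0 < ι₀) (hC : 1 < C)
    -- the DP-APVI backward-recursion quantities
    (Qtil Γ Qbar : ℕ → S → A → ℝ) (Vtil : ℕ → S → ℝ)
    (hVtop : ∀ s, Vtil (H + 1) s = 0)
    (hQtil : ∀ h ∈ Icc 1 H, ∀ s a,
      Qtil h s a = r h s a + ∑ s' : S, Pt h s a s' * Vtil (h + 1) s')
    (hΓ : ∀ h ∈ Icc 1 H, ∀ s a,
      Γ h s a = if E < ntil h s a then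
          Real.sqrt 2 *
            Real.sqrt (distVar (Pt h s a) (Vtil (h + 1)) * ι₀ / (ntil h s a - E)) +
          16 * (Fintype.card S : ℝ) * H * E * ι₀ / ntil h s a
        else C * H)
    (hQbar : ∀ h ∈ Icc 1 H, ∀ s a,
      Qbar h s a = min (max (Qtil h s a - Γ h s a) 0) ((H : ℝ) - h + 1))
    (hVtil : ∀ h ∈ Icc 1 H, ∀ s,
      Vtil h s = univ.sup' univ_nonempty (fun a => Qbar h s a))
    -- the assumed private Bernstein bound
    (hBern : ∀ h ∈ Icc 1 H, ∀ s a, 3 * E < ntil h s a →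
      |∑ s' : S, (Pt h s a s' - P h s a s') * Vtil (h + 1) s'| ≤
        Real.sqrt (2 * distVar (Pt h s a) (Vtil (h + 1)) * ι₀ / (ntil h s a - E)) +
          16 * (Fintype.card S : ℝ) * H * E * ι₀ / ntil h s a) :
    ∀ h ∈ Icc 1 H, ∀ s a, 3 * E < ntil h s a →
      0 ≤ bellmanT P r h (Vtil (h + 1)) s a - Qbar h s a ∧
        bellmanT P r h (Vtil (h + 1)) s a - Qbar h s a ≤
          2 * Real.sqrt (2 * distVar (Pt h s a) (Vtil (h + 1)) * ι₀ / (ntil h s a - E)) +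
            32 * (Fintype.card S : ℝ) * H * E * ι₀ / ntil h s a := by
  intro h hmem s a hn3
  obtain ⟨hh1, hhH⟩ := mem_Icc.mp hmem
  have hEn : E < ntil h s a := by nlinarith
  have hnpos : 0 < ntil h s a := by nlinarith
  have hBern' := hBern h hmem s a hn3
  rw [abs_le] at hBern'
  set B := Real.sqrt (2 * distVar (Pt h s a) (Vtil (h + 1)) * ι₀ / (ntil h s a - E)) +
      16 * (Fintype.card S : ℝ) * H * E * ι₀ / ntil h s a with hB
  -- Γ = B
  have hΓeq : Γ h s a = B := by
    rw [hΓ h hmem s a, if_pos hEn, hB]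
    congr 1
    rw [← Real.sqrt_mul (by norm_num : (0:ℝ) ≤ 2)]
    congr 1
    ring
  have hBnn : 0 ≤ B := by
    rw [hB]
    have h1 : 0 ≤ Real.sqrt (2 * distVar (Pt h s a) (Vtil (h + 1)) * ι₀ / (ntil h s a - E)) :=
      Real.sqrt_nonneg _
    have h2 : 0 ≤ 16 * (Fintype.card S : ℝ) * H * E * ι₀ / ntil h s a := by
      apply div_nonneg _ hnpos.le
      positivity
    linarith
  -- bounds on Vtil (h+1)
  have hVbd : ∀ s', 0 ≤ Vtil (h + 1) s' ∧ Vtil (h + 1) s' ≤ (H : ℝ) - h := by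
    intro s'
    by_cases hcase : h = H
    · subst hcase
      rw [hVtop s']
      constructor <;> simp
    · have hm : h + 1 ∈ Icc 1 H := mem_Icc.mpr ⟨by omega, by omega⟩
      rw [hVtil (h + 1) hm s']
      have hub : ((H : ℝ) - (h + 1 : ℕ) + 1) = (H : ℝ) - h := by push_cast; ring
      have hubnn : (0:ℝ) ≤ (H : ℝ) - (h + 1 : ℕ) + 1 := by
        rw [hub]
        have : (h : ℝ) + 1 ≤ H := by exact_mod_cast Nat.succ_le_of_lt (by omega)
        linarith
      constructor
      · obtain ⟨a0⟩ := (inferInstance : Nonempty A)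
        refine le_trans ?_ (Finset.le_sup' _ (mem_univ a0))
        rw [hQbar (h + 1) hm s' a0]
        exact le_min (le_max_right _ _) hubnn
      · apply Finset.sup'_le
        intro b _
        rw [hQbar (h + 1) hm s' b, ← hub]
        exact min_le_right _ _
  -- T - Qtil identity
  have hkey : ∑ s' : S, (Pt h s a s' - P h s a s') * Vtil (h + 1) s' =
      (∑ s' : S, Pt h s a s' * Vtil (h + 1) s') -
        ∑ s' : S, P h s a s' * Vtil (h + 1) s' := by
    rw [← Finset.sum_sub_distrib]
    exact Finset.sum_congr rfl fun _ _ => by ring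
  have hdiff : bellmanT P r h (Vtil (h + 1)) s a - Qtil h s a =
      -∑ s' : S, (Pt h s a s' - P h s a s') * Vtil (h + 1) s' := by
    rw [hkey, hQtil h hmem s a, bellmanT]
    ring
  have hTQl : Qtil h s a - B ≤ bellmanT P r h (Vtil (h + 1)) s a := by
    linarith [hBern'.2, hdiff]
  have hTQu : bellmanT P r h (Vtil (h + 1)) s a ≤ Qtil h s a + B := by
    linarith [hBern'.1, hdiff]
  -- 0 ≤ T and T ≤ H - h + 1
  have hTnn : 0 ≤ bellmanT P r h (Vtil (h + 1)) s a := by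
    rw [bellmanT]
    have : 0 ≤ ∑ s' : S, P h s a s' * Vtil (h + 1) s' :=
      Finset.sum_nonneg fun s' _ => mul_nonneg (hPnn h hmem s a s') (hVbd s').1
    linarith [hrnn h hmem s a]
  have hTub : bellmanT P r h (Vtil (h + 1)) s a ≤ (H : ℝ) - h + 1 := by
    rw [bellmanT]
    have hsum : ∑ s' : S, P h s a s' * Vtil (h + 1) s' ≤ (H : ℝ) - h := by
      calc ∑ s' : S, P h s a s' * Vtil (h + 1) s'
          ≤ ∑ s' : S, P h s a s' * ((H : ℝ) - h) :=
            Finset.sum_le_sum fun s' _ =>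
              mul_le_mul_of_nonneg_left (hVbd s').2 (hPnn h hmem s a s')
        _ = (H : ℝ) - h := by rw [← Finset.sum_mul, hPsum h hmem s a, one_mul]
    linarith [hr1 h hmem s a]
  -- Qbar
  have hQb := hQbar h hmem s a
  rw [hΓeq] at hQb
  constructor
  · have : Qbar h s a ≤ bellmanT P r h (Vtil (h + 1)) s a := by
      rw [hQb]
      refine le_trans (min_le_left _ _) (max_le (by linarith) hTnn)
    linarith
  · have h2B : 2 * Real.sqrt (2 * distVar (Pt h s a) (Vtil (h + 1)) * ι₀ / (ntil h s a - E)) +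
        32 * (Fintype.card S : ℝ) * H * E * ι₀ / ntil h s a = 2 * B := by rw [hB]; ring
    rw [h2B, hQb]
    rcases le_total (max (Qtil h s a - B) 0) ((H:ℝ) - h + 1) with hle | hle
    · rw [min_eq_left hle]
      have : Qtil h s a - B ≤ max (Qtil h s a - B) 0 := le_max_left _ _
      linarith
    · rw [min_eq_right hle]
      linarith
end

section
/- Transfer of an empirical-Bernstein bound to private statistics (deterministic chain in the proof of Lemma B.4): Let ι be a finite type with S ≥ 1 elements and let p, p̂, p̃ be probability distributions on ι. Let V : ι → ℝ with 0 ≤ V(i) ≤ H for all i, where H > 0. Let E > 0, ι₀ ≥ 1 and reals ñ, n satisfy S·E ≥ 1, ñ ≥ 3E, |ñ − n| ≤ E. Assume: (i) Σ_i |p̃_i − p̂_i| ≤ 5·S·E/ñ; (ii) |√(Var_{p̂}(V)) − √(Var_{p̃}(V))| ≤ 4H·√(S·E/ñ); (iii) |Σ_i (p̂_i − p_i)·V(i)| ≤ √(2·Var_{p̂}(V)·ι₀/n) + 7H·ι₀/(3n). Then |Σ_i (p̃_i − p_i)·V(i)| ≤ √(2·Var_{p̃}(V)·ι₀/(ñ−E))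 + 16·S·H·E·ι₀/ñ. -/
open Finset

set_option maxHeartbeats 1000000 in
/-- Transfer of an empirical-Bernstein bound to private statistics (deterministic chain
in the proof of Lemma B.4). -/
theorem bernstein_transfer_private
    {ι : Type*} [Fintype ι] (hS : 1 ≤ Fintype.card ι)
    (p phat ptil : ι → ℝ)
    (hpnn : ∀ i, 0 ≤ p i) (hpsum : ∑ i, p i = 1)
    (hphatnn : ∀ i, 0 ≤ phat i) (hphatsum : ∑ i, phat i = 1)
    (hptilnn : ∀ i, 0 ≤ ptil i) (hptilsum : ∑ i, ptil i = 1)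
    (H : ℝ) (hH : 0 < H) (V : ι → ℝ) (hVnn : ∀ i, 0 ≤ V i) (hVle : ∀ i, V i ≤ H)
    (E ι₀ ntil n : ℝ) (hE : 0 < E) (hι₀ : 1 ≤ ι₀)
    (hSE : 1 ≤ (Fintype.card ι : ℝ) * E)
    (hntil : 3 * E ≤ ntil) (hnclose : |ntil - n| ≤ E)
    (h1 : ∑ i, |ptil i - phat i| ≤ 5 * (Fintype.card ι : ℝ) * E / ntil)
    (h2 : |Real.sqrt (distVar phat V) - Real.sqrt (distVar ptil V)| ≤
      4 * H * Real.sqrt ((Fintype.card ι : ℝ) * E / ntil))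
    (h3 : |∑ i, (phat i - p i) * V i| ≤
      Real.sqrt (2 * distVar phat V * ι₀ / n) + 7 * H * ι₀ / (3 * n)) :
    |∑ i, (ptil i - p i) * V i| ≤
      Real.sqrt (2 * distVar ptil V * ι₀ / (ntil - E)) +
        16 * (Fintype.card ι : ℝ) * H * E * ι₀ / ntil := by
  set S := (Fintype.card ι : ℝ) with hSdef
  have hS1 : (1:ℝ) ≤ S := by rw [hSdef]; exact_mod_cast hS
  have hntil0 : 0 < ntil := by linarith
  obtain ⟨hc1, hc2⟩ := abs_le.mp hnclose
  have hnE : ntil - E ≤ n := by linarith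
  have hn0 : 0 < n := by linarith
  have hnE0 : 0 < ntil - E := by linarith
  have hι₀0 : (0:ℝ) < ι₀ := by linarith
  -- nonnegativity of variance
  have varnn : ∀ q : ι → ℝ, (∀ i, 0 ≤ q i) → (∑ i, q i = 1) → 0 ≤ distVar q V := by
    intro q hq hq1
    have cs := Finset.sum_mul_sq_le_sq_mul_sq Finset.univ (fun i => Real.sqrt (q i))
      (fun i => Real.sqrt (q i) * V i)
    have e1 : ∀ i : ι, Real.sqrt (q i) * (Real.sqrt (q i) * V i) = q i * V i := by
      intro i; rw [← mul_assoc, Real.mul_self_sqrt (hq i)]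
    have e2 : ∀ i : ι, Real.sqrt (q i) ^ 2 = q i := fun i => Real.sq_sqrt (hq i)
    have e3 : ∀ i : ι, (Real.sqrt (q i) * V i) ^ 2 = q i * V i ^ 2 := by
      intro i; rw [mul_pow, e2]
    simp only [e1, e2, e3] at cs
    rw [hq1, one_mul] at cs
    unfold distVar
    linarith
  have vp := varnn phat hphatnn hphatsum
  have vt := varnn ptil hptilnn hptilsum
  -- split the sum
  have split : ∑ i, (ptil i - p i) * V i
      = (∑ i, (ptil i - phat i) * V i) + ∑ i, (phat i - p i) * V i := by
    rw [← Finset.sum_add_distrib]; apply Finset.sum_congr rfl; intros; ring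
  have habs1 : |∑ i, (ptil i - phat i) * V i| ≤ 5 * S * E / ntil * H := by
    calc |∑ i, (ptil i - phat i) * V i|
        ≤ ∑ i, |(ptil i - phat i) * V i| := Finset.abs_sum_le_sum_abs _ _
      _ ≤ ∑ i, |ptil i - phat i| * H := by
          apply Finset.sum_le_sum; intro i _
          rw [abs_mul, abs_of_nonneg (hVnn i)]
          exact mul_le_mul_of_nonneg_left (hVle i) (abs_nonneg _)
      _ = (∑ i, |ptil i - phat i|) * H := (Finset.sum_mul _ _ _).symm
      _ ≤ 5 * S * E / ntil * H := mul_le_mul_of_nonneg_right h1 hH.le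
  -- sqrt factorizations
  have hq1 : Real.sqrt (2 * distVar phat V * ι₀ / n)
      = Real.sqrt (distVar phat V) * Real.sqrt (2 * ι₀ / n) := by
    rw [show 2 * distVar phat V * ι₀ / n = distVar phat V * (2 * ι₀ / n) by ring,
      Real.sqrt_mul vp]
  have hq2 : Real.sqrt (distVar ptil V) * Real.sqrt (2 * ι₀ / (ntil - E))
      = Real.sqrt (2 * distVar ptil V * ι₀ / (ntil - E)) := by
    rw [show 2 * distVar ptil V * ι₀ / (ntil - E) = distVar ptil V * (2 * ι₀ / (ntil - E)) by ring,
      Real.sqrt_mul vt]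
  have hu : Real.sqrt (2 * ι₀ / n) ≤ Real.sqrt (2 * ι₀ / (ntil - E)) := by
    apply Real.sqrt_le_sqrt
    gcongr
  have ha : Real.sqrt (distVar phat V)
      ≤ Real.sqrt (distVar ptil V) + 4 * H * Real.sqrt (S * E / ntil) :=
    by linarith [(abs_le.mp h2).2]
  -- bound the cross term t
  have ht : Real.sqrt (S * E / ntil) * Real.sqrt (2 * ι₀ / n) ≤ 1.74 * (S * E * ι₀) / ntil := by
    rw [← Real.sqrt_mul (by positivity)]
    have hsq : S * E / ntil * (2 * ι₀ / n) ≤ (1.74 * (S * E * ι₀) / ntil) ^ 2 := by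
      rw [div_mul_div_comm, div_pow, div_le_div_iff₀ (by positivity) (by positivity)]
      have h23 : 2 * ntil ≤ 3 * n := by linarith
      nlinarith [mul_pos hntil0 hn0, mul_pos (mul_pos hntil0 hntil0) hn0,
        mul_le_mul_of_nonneg_left h23 (by positivity : (0:ℝ) ≤ S * E * ι₀ * ntil),
        mul_le_mul_of_nonneg_right hSE (by positivity : (0:ℝ) ≤ ι₀),
        sq_nonneg (S * E * ι₀ - 1)]
    calc Real.sqrt (S * E / ntil * (2 * ι₀ / n))
        ≤ Real.sqrt ((1.74 * (S * E * ι₀) / ntil) ^ 2) := Real.sqrt_le_sqrt hsq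
      _ = 1.74 * (S * E * ι₀) / ntil := Real.sqrt_sq (by positivity)
  -- main chain
  have key : Real.sqrt (2 * distVar phat V * ι₀ / n)
      ≤ Real.sqrt (2 * distVar ptil V * ι₀ / (ntil - E))
        + 4 * H * (1.74 * (S * E * ι₀) / ntil) := by
    rw [hq1]
    calc Real.sqrt (distVar phat V) * Real.sqrt (2 * ι₀ / n)
        ≤ (Real.sqrt (distVar ptil V) + 4 * H * Real.sqrt (S * E / ntil))
            * Real.sqrt (2 * ι₀ / n) :=
          mul_le_mul_of_nonneg_right ha (Real.sqrt_nonneg _)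
      _ = Real.sqrt (distVar ptil V) * Real.sqrt (2 * ι₀ / n)
            + 4 * H * (Real.sqrt (S * E / ntil) * Real.sqrt (2 * ι₀ / n)) := by ring
      _ ≤ Real.sqrt (distVar ptil V) * Real.sqrt (2 * ι₀ / (ntil - E))
            + 4 * H * (1.74 * (S * E * ι₀) / ntil) := by
          gcongr <;> positivity
      _ = Real.sqrt (2 * distVar ptil V * ι₀ / (ntil - E))
            + 4 * H * (1.74 * (S * E * ι₀) / ntil) := by rw [hq2]
  -- numeric tail bounds
  have e1 : 5 * S * E / ntil * H ≤ 5 * (S * H * E * ι₀) / ntil := by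
    rw [show 5 * S * E / ntil * H = 5 * (S * H * E) / ntil by ring]
    apply div_le_div_of_nonneg_right ?_ hntil0.le
    nlinarith [mul_le_mul_of_nonneg_left hι₀ (by positivity : (0:ℝ) ≤ S * H * E)]
  have e2 : 4 * H * (1.74 * (S * E * ι₀) / ntil) ≤ 7 * (S * H * E * ι₀) / ntil := by
    rw [show 4 * H * (1.74 * (S * E * ι₀) / ntil) = 6.96 * (S * H * E * ι₀) / ntil by ring]
    apply div_le_div_of_nonneg_right ?_ hntil0.le
    nlinarith [mul_pos (mul_pos (mul_pos (lt_of_lt_of_le one_pos hS1) hH) hE) hι₀0]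
  have e3 : 7 * H * ι₀ / (3 * n) ≤ 4 * (S * H * E * ι₀) / ntil := by
    rw [div_le_div_iff₀ (by positivity) hntil0]
    have h23 : 2 * ntil ≤ 3 * n := by linarith
    nlinarith [mul_le_mul_of_nonneg_left h23 (by positivity : (0:ℝ) ≤ H * ι₀),
      mul_le_mul_of_nonneg_right hSE (by positivity : (0:ℝ) ≤ H * ι₀ * n),
      (by positivity : (0:ℝ) ≤ S * E * H * ι₀ * n)]
  have final : 5 * (S*H*E*ι₀)/ntil + 7 * (S*H*E*ι₀)/ntil + 4 * (S*H*E*ι₀)/ntil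
      ≤ 16 * S * H * E * ι₀ / ntil := le_of_eq (by ring)
  calc |∑ i, (ptil i - p i) * V i|
      ≤ |∑ i, (ptil i - phat i) * V i| + |∑ i, (phat i - p i) * V i| := by
        rw [split]; exact abs_add_le _ _
    _ ≤ 5 * S * E / ntil * H
        + (Real.sqrt (2 * distVar phat V * ι₀ / n) + 7 * H * ι₀ / (3 * n)) :=
        add_le_add habs1 h3
    _ ≤ Real.sqrt (2 * distVar ptil V * ι₀ / (ntil - E))
        + 16 * S * H * E * ι₀ / ntil := by
        linarith [key, e1, e2, e3, final]
end

section
/- ℓ1 closeness of normalized private counts (Lemma B.3): Let ι be a finite type with S ≥ 1 elements, E > 0, and let ñ, n : ι → ℝ be nonnegative with |ñ(i) − n(i)| ≤ E for all i. Write Ñ := Σ_i ñ(i) and N := Σ_i n(i), and assume |Ñ − N| ≤ E and Ñ ≥ 3E. Then the normalized distributions p̃(i) := ñ(i)/Ñ and p̂(i) := n(i)/N are well defined (N ≥ 2E > 0) and satisfy Σ_i |p̃(i) − p̂(i)| ≤ 5·S·E/Ñ. -/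
open Finset

/-
Each normalized count differs from the other by a count error and a normalization error:
`x/X - y/Y = ((x - y) - (y/Y)(X - Y))/X`. The count errors contribute at most `S·E/Ñ` in total,
and the normalization errors are weighted by `y i / Y`, which sum to one, so they contribute
`E/Ñ` in total. Hence the ℓ1 distance is at most `(S + 1)·E/Ñ ≤ 5·S·E/Ñ`.
-/

lemma abs_div_sub_div_le {x y X Y e δ : ℝ} (hX : 0 < X) (hY : 0 < Y) (hy : 0 ≤ y)
    (hxy : |x - y| ≤ e) (hXY : |X - Y| ≤ δ) :
    |x / X - y / Y| ≤ (e + y / Y * δ) / X := by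
  have hsplit : x / X - y / Y = ((x - y) - y / Y * (X - Y)) / X := by
    field_simp
    ring
  rw [hsplit, abs_div, abs_of_pos hX]
  gcongr
  calc |(x - y) - y / Y * (X - Y)|
      ≤ |x - y| + |y / Y * (X - Y)| := abs_sub _ _
    _ ≤ e + y / Y * δ := by
        rw [abs_mul, abs_of_nonneg (div_nonneg hy hY.le)]
        gcongr

lemma sum_abs_div_sum_sub_div_sum_le {ι : Type*} {s : Finset ι} {x y : ι → ℝ} {e δ : ℝ}
    (hy : ∀ i ∈ s, 0 ≤ y i) (hX : 0 < ∑ i ∈ s, x i) (hY : 0 < ∑ i ∈ s, y i)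
    (hxy : ∀ i ∈ s, |x i - y i| ≤ e) (hXY : |∑ i ∈ s, x i - ∑ i ∈ s, y i| ≤ δ) :
    ∑ i ∈ s, |x i / ∑ j ∈ s, x j - y i / ∑ j ∈ s, y j| ≤ (#s * e + δ) / ∑ i ∈ s, x i := by
  set X := ∑ i ∈ s, x i
  set Y := ∑ i ∈ s, y i
  calc ∑ i ∈ s, |x i / X - y i / Y|
      ≤ ∑ i ∈ s, (e + y i / Y * δ) / X :=
        sum_le_sum fun i hi => abs_div_sub_div_le hX hY (hy i hi) (hxy i hi) hXY
    _ = (#s * e + δ) / X := by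
        rw [← sum_div, sum_add_distrib, sum_const, nsmul_eq_mul, ← sum_mul, ← sum_div,
          div_self hY.ne', one_mul]

theorem l1_closeness_normalized_counts_general
    {ι : Type*} [Fintype ι] (hS : 1 ≤ Fintype.card ι)
    (E : ℝ) (hE : 0 < E)
    (ntil n : ι → ℝ)
    (hnnn : ∀ i, 0 ≤ n i)
    (hclose : ∀ i, |ntil i - n i| ≤ E)
    (hsumclose : |(∑ i, ntil i) - ∑ i, n i| ≤ E)
    (hNtil : 3 * E ≤ ∑ i, ntil i) :
    2 * E ≤ ∑ i, n i ∧
      ∑ i, |ntil i / (∑ j, ntil j) - n i / (∑ j, n j)| ≤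
        5 * (Fintype.card ι : ℝ) * E / (∑ i, ntil i) := by
  have hN : 2 * E ≤ ∑ i, n i := by linarith [(abs_le.mp hsumclose).2]
  refine ⟨hN, ?_⟩
  have hS' : (1 : ℝ) ≤ Fintype.card ι := by exact_mod_cast hS
  calc ∑ i, |ntil i / (∑ j, ntil j) - n i / (∑ j, n j)|
      ≤ (Fintype.card ι * E + E) / ∑ i, ntil i :=
        sum_abs_div_sum_sub_div_sum_le (fun i _ => hnnn i) (by linarith) (by linarith)
          (fun i _ => hclose i) hsumclose
    _ ≤ 5 * (Fintype.card ι : ℝ) * E / ∑ i, ntil i := by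
        gcongr
        · linarith
        · nlinarith

/-- ℓ1 closeness of normalized private counts (Lemma B.3). -/
theorem l1_closeness_normalized_counts
    {ι : Type*} [Fintype ι] (hS : 1 ≤ Fintype.card ι)
    (E : ℝ) (hE : 0 < E)
    (ntil n : ι → ℝ)
    (hntilnn : ∀ i, 0 ≤ ntil i) (hnnn : ∀ i, 0 ≤ n i)
    (hclose : ∀ i, |ntil i - n i| ≤ E)
    (hsumclose : |(∑ i, ntil i) - ∑ i, n i| ≤ E)
    (hNtil : 3 * E ≤ ∑ i, ntil i) :
    2 * E ≤ ∑ i, n i ∧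
      ∑ i, |ntil i / (∑ j, ntil j) - n i / (∑ j, n j)| ≤
        5 * (Fintype.card ι : ℝ) * E / (∑ i, ntil i) :=
  l1_closeness_normalized_counts_general hS E hE ntil n hnnn hclose hsumclose hNtil
end

section
/- Standard-deviation stability under ℓ1 perturbation of the distribution (Lemma B.5 of the tabular analysis): Let p, q be probability distributions on a finite type ι with Σ_i |p_i − q_i| ≤ 5·S·E/ñ, where S ≥ 1, E > 0, ñ > 0 are reals, and let V : ι → ℝ satisfy |V(i)| ≤ H for all i. Then |√(Var_p(V)) − √(Var_q(V))| ≤ 4H·√(S·E/ñ). -/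
open Finset

lemma distVar_nonneg {ι : Type*} [Fintype ι] (q V : ι → ℝ)
    (hqnn : ∀ i, 0 ≤ q i) (hqsum : ∑ i, q i = 1) : 0 ≤ distVar q V := by
  have h := Finset.sum_mul_sq_le_sq_mul_sq Finset.univ
    (fun i => Real.sqrt (q i)) (fun i => Real.sqrt (q i) * V i)
  have h1 : ∀ i : ι, Real.sqrt (q i) * (Real.sqrt (q i) * V i) = q i * V i := by
    intro i; rw [← mul_assoc, Real.mul_self_sqrt (hqnn i)]
  have h2 : ∀ i : ι, Real.sqrt (q i) ^ 2 = q i := fun i => Real.sq_sqrt (hqnn i)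
  have h3 : ∀ i : ι, (Real.sqrt (q i) * V i) ^ 2 = q i * V i ^ 2 := by
    intro i; rw [mul_pow, h2]
  simp only [h1, h2, h3, hqsum, one_mul] at h
  simpa [distVar] using sub_nonneg.2 h

lemma abs_sqrt_sub_sqrt_le {a b : ℝ} (ha : 0 ≤ a) (hb : 0 ≤ b) :
    |Real.sqrt a - Real.sqrt b| ≤ Real.sqrt |a - b| := by
  wlog h : b ≤ a generalizing a b
  · rw [abs_sub_comm, abs_sub_comm a b]; exact this hb ha (le_of_not_ge h)
  have hsle : Real.sqrt b ≤ Real.sqrt a := Real.sqrt_le_sqrt h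
  rw [abs_of_nonneg (sub_nonneg.2 hsle), abs_of_nonneg (sub_nonneg.2 h)]
  have h1 := Real.sq_sqrt ha
  have h2 := Real.sq_sqrt hb
  have h3 := Real.sq_sqrt (sub_nonneg.2 h)
  have n1 := Real.sqrt_nonneg a
  have n2 := Real.sqrt_nonneg b
  have n3 := Real.sqrt_nonneg (a - b)
  nlinarith [mul_nonneg n2 n3, sq_nonneg (Real.sqrt a - Real.sqrt b - Real.sqrt (a - b))]

/-- Standard-deviation stability under ℓ1 perturbation of the distribution
(Lemma B.5 of the tabular analysis). -/
theorem sqrt_var_stability_l1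
    {ι : Type*} [Fintype ι]
    (p q : ι → ℝ)
    (hpnn : ∀ i, 0 ≤ p i) (hpsum : ∑ i, p i = 1)
    (hqnn : ∀ i, 0 ≤ q i) (hqsum : ∑ i, q i = 1)
    (S E ntil : ℝ) (hS : 1 ≤ S) (hE : 0 < E) (hntil : 0 < ntil)
    (hl1 : ∑ i, |p i - q i| ≤ 5 * S * E / ntil)
    (H : ℝ) (V : ι → ℝ) (hV : ∀ i, |V i| ≤ H) :
    |Real.sqrt (distVar p V) - Real.sqrt (distVar q V)| ≤
      4 * H * Real.sqrt (S * E / ntil) := by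
  have hne : Nonempty ι := by
    by_contra h
    rw [not_nonempty_iff] at h
    simp [Finset.univ_eq_empty] at hpsum
  have hH : 0 ≤ H := le_trans (abs_nonneg _) (hV (Classical.arbitrary ι))
  set L := ∑ i, |p i - q i| with hLdef
  have hL0 : 0 ≤ L := Finset.sum_nonneg fun i _ => abs_nonneg _
  -- mean bound
  have hmean : ∀ (r : ι → ℝ), (∀ i, 0 ≤ r i) → (∑ i, r i = 1) → |∑ i, r i * V i| ≤ H := by
    intro r hrnn hrsum
    calc |∑ i, r i * V i| ≤ ∑ i, |r i * V i| := Finset.abs_sum_le_sum_abs _ _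
      _ ≤ ∑ i, r i * H := by
          refine Finset.sum_le_sum fun i _ => ?_
          rw [abs_mul, abs_of_nonneg (hrnn i)]
          exact mul_le_mul_of_nonneg_left (hV i) (hrnn i)
      _ = H := by rw [← Finset.sum_mul, hrsum, one_mul]
  -- second-moment difference
  have h1 : |∑ i, p i * V i ^ 2 - ∑ i, q i * V i ^ 2| ≤ H ^ 2 * L := by
    rw [← Finset.sum_sub_distrib]
    calc |∑ i, (p i * V i ^ 2 - q i * V i ^ 2)| ≤ ∑ i, |p i * V i ^ 2 - q i * V i ^ 2| :=
          Finset.abs_sum_le_sum_abs _ _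
      _ ≤ ∑ i, H ^ 2 * |p i - q i| := by
          refine Finset.sum_le_sum fun i _ => ?_
          have : p i * V i ^ 2 - q i * V i ^ 2 = (p i - q i) * V i ^ 2 := by ring
          rw [this, abs_mul, abs_of_nonneg (sq_nonneg (V i)), mul_comm]
          have hVi : V i ^ 2 ≤ H ^ 2 := by
            have := hV i
            nlinarith [abs_nonneg (V i), sq_abs (V i)]
          exact mul_le_mul_of_nonneg_right hVi (abs_nonneg _)
      _ = H ^ 2 * L := by rw [← Finset.mul_sum]
  -- square-of-mean difference
  have hmd : |∑ i, p i * V i - ∑ i, q i * V i| ≤ H * L := by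
    rw [← Finset.sum_sub_distrib]
    calc |∑ i, (p i * V i - q i * V i)| ≤ ∑ i, |p i * V i - q i * V i| :=
          Finset.abs_sum_le_sum_abs _ _
      _ ≤ ∑ i, H * |p i - q i| := by
          refine Finset.sum_le_sum fun i _ => ?_
          have : p i * V i - q i * V i = (p i - q i) * V i := by ring
          rw [this, abs_mul, mul_comm]
          exact mul_le_mul_of_nonneg_right (hV i) (abs_nonneg _)
      _ = H * L := by rw [← Finset.mul_sum]
  have h2 : |(∑ i, p i * V i) ^ 2 - (∑ i, q i * V i) ^ 2| ≤ 2 * H * (H * L) := by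
    have : (∑ i, p i * V i) ^ 2 - (∑ i, q i * V i) ^ 2 =
        ((∑ i, p i * V i) + (∑ i, q i * V i)) * ((∑ i, p i * V i) - (∑ i, q i * V i)) := by ring
    rw [this, abs_mul]
    have hsum : |(∑ i, p i * V i) + (∑ i, q i * V i)| ≤ 2 * H := by
      calc |(∑ i, p i * V i) + (∑ i, q i * V i)| ≤
          |∑ i, p i * V i| + |∑ i, q i * V i| := abs_add_le _ _
        _ ≤ H + H := add_le_add (hmean p hpnn hpsum) (hmean q hqnn hqsum)
        _ = 2 * H := by ring
    exact mul_le_mul hsum hmd (abs_nonneg _) (by positivity)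
  have hvd : |distVar p V - distVar q V| ≤ 3 * H ^ 2 * L := by
    have : distVar p V - distVar q V =
        (∑ i, p i * V i ^ 2 - ∑ i, q i * V i ^ 2) -
          ((∑ i, p i * V i) ^ 2 - (∑ i, q i * V i) ^ 2) := by
      simp [distVar]; ring
    rw [this]
    calc |_ - _| ≤ |∑ i, p i * V i ^ 2 - ∑ i, q i * V i ^ 2| +
          |(∑ i, p i * V i) ^ 2 - (∑ i, q i * V i) ^ 2| := abs_sub _ _
      _ ≤ H ^ 2 * L + 2 * H * (H * L) := add_le_add h1 h2
      _ = 3 * H ^ 2 * L := by ring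
  have hx : (0:ℝ) < S * E / ntil := by positivity
  have hvd' : |distVar p V - distVar q V| ≤ 16 * H ^ 2 * (S * E / ntil) := by
    have hL : L ≤ 5 * (S * E / ntil) := by
      have : 5 * S * E / ntil = 5 * (S * E / ntil) := by ring
      linarith [hl1, this.symm.le, this.le]
    nlinarith [sq_nonneg H, mul_le_mul_of_nonneg_left hL (sq_nonneg H)]
  calc |Real.sqrt (distVar p V) - Real.sqrt (distVar q V)|
      ≤ Real.sqrt |distVar p V - distVar q V| :=
        abs_sqrt_sub_sqrt_le (distVar_nonneg p V hpnn hpsum) (distVar_nonneg q V hqnn hqsum)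
    _ ≤ Real.sqrt (16 * H ^ 2 * (S * E / ntil)) := Real.sqrt_le_sqrt hvd'
    _ = 4 * H * Real.sqrt (S * E / ntil) := by
        rw [show (16:ℝ) * H ^ 2 * (S * E / ntil) = (4 * H) ^ 2 * (S * E / ntil) by ring,
          Real.sqrt_mul (by positivity), Real.sqrt_sq (by positivity)]
end

section
/- Lipschitz property of the clipped variance (deterministic core of Lemma C.10): Let p be a probability distribution on a finite type ι, let H > 0, and let V, W : ι → ℝ satisfy 0 ≤ V(i) ≤ H and 0 ≤ W(i) ≤ H for all i. Then |max{1, Var_p(V)} − max{1, Var_p(W)}| ≤ 4H · max_i |V(i) − W(i)|. -/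
open Finset

/-- Lipschitz property of the clipped variance (deterministic core of Lemma C.10):
`|max{1, Var_p(V)} − max{1, Var_p(W)}| ≤ 4H · max_i |V(i) − W(i)|`. -/
theorem clipped_var_lipschitz
    {ι : Type*} [Fintype ι] [Nonempty ι]
    (p : ι → ℝ) (hpnn : ∀ i, 0 ≤ p i) (hpsum : ∑ i, p i = 1)
    (H : ℝ) (hH : 0 < H)
    (V W : ι → ℝ)
    (hVnn : ∀ i, 0 ≤ V i) (hVle : ∀ i, V i ≤ H)
    (hWnn : ∀ i, 0 ≤ W i) (hWle : ∀ i, W i ≤ H) :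
    |max 1 (distVar p V) - max 1 (distVar p W)| ≤
      4 * H * univ.sup' univ_nonempty (fun i => |V i - W i|) := by
  set M := univ.sup' univ_nonempty (fun i => |V i - W i|) with hMdef
  have hM : ∀ i, |V i - W i| ≤ M := fun i => le_sup' (fun j => |V j - W j|) (mem_univ i)
  have hMnn : 0 ≤ M := le_trans (abs_nonneg _) (hM (Classical.arbitrary ι))
  have hSV : 0 ≤ ∑ i, p i * V i :=
    Finset.sum_nonneg fun i _ => mul_nonneg (hpnn i) (hVnn i)
  have hSW : 0 ≤ ∑ i, p i * W i :=
    Finset.sum_nonneg fun i _ => mul_nonneg (hpnn i) (hWnn i)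
  have hSVle : ∑ i, p i * V i ≤ H := by
    calc ∑ i, p i * V i ≤ ∑ i, p i * H :=
          Finset.sum_le_sum fun i _ => mul_le_mul_of_nonneg_left (hVle i) (hpnn i)
      _ = H := by rw [← Finset.sum_mul, hpsum, one_mul]
  have hSWle : ∑ i, p i * W i ≤ H := by
    calc ∑ i, p i * W i ≤ ∑ i, p i * H :=
          Finset.sum_le_sum fun i _ => mul_le_mul_of_nonneg_left (hWle i) (hpnn i)
      _ = H := by rw [← Finset.sum_mul, hpsum, one_mul]
  have hdiff1 : |∑ i, p i * V i ^ 2 - ∑ i, p i * W i ^ 2| ≤ 2 * H * M := by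
    rw [← Finset.sum_sub_distrib]
    calc |∑ i, (p i * V i ^ 2 - p i * W i ^ 2)|
        ≤ ∑ i, |p i * V i ^ 2 - p i * W i ^ 2| := Finset.abs_sum_le_sum_abs _ _
      _ ≤ ∑ i, p i * (2 * H * M) := by
          refine Finset.sum_le_sum fun i _ => ?_
          rw [← mul_sub, abs_mul, abs_of_nonneg (hpnn i)]
          refine mul_le_mul_of_nonneg_left ?_ (hpnn i)
          have h1 : V i ^ 2 - W i ^ 2 = (V i + W i) * (V i - W i) := by ring
          rw [h1, abs_mul]
          have h2 : |V i + W i| ≤ 2 * H := by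
            rw [abs_of_nonneg (add_nonneg (hVnn i) (hWnn i))]
            linarith [hVle i, hWle i]
          exact mul_le_mul h2 (hM i) (abs_nonneg _) (by linarith)
      _ = 2 * H * M := by rw [← Finset.sum_mul, hpsum, one_mul]
  have hSdiff : |∑ i, p i * V i - ∑ i, p i * W i| ≤ M := by
    rw [← Finset.sum_sub_distrib]
    calc |∑ i, (p i * V i - p i * W i)|
        ≤ ∑ i, |p i * V i - p i * W i| := Finset.abs_sum_le_sum_abs _ _
      _ ≤ ∑ i, p i * M := by
          refine Finset.sum_le_sum fun i _ => ?_
          rw [← mul_sub, abs_mul, abs_of_nonneg (hpnn i)]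
          exact mul_le_mul_of_nonneg_left (hM i) (hpnn i)
      _ = M := by rw [← Finset.sum_mul, hpsum, one_mul]
  have hdiff2 : |(∑ i, p i * V i) ^ 2 - (∑ i, p i * W i) ^ 2| ≤ 2 * H * M := by
    have h1 : (∑ i, p i * V i) ^ 2 - (∑ i, p i * W i) ^ 2 =
        ((∑ i, p i * V i) + (∑ i, p i * W i)) * ((∑ i, p i * V i) - (∑ i, p i * W i)) := by
      ring
    rw [h1, abs_mul]
    have h2 : |(∑ i, p i * V i) + (∑ i, p i * W i)| ≤ 2 * H := by
      rw [abs_of_nonneg (add_nonneg hSV hSW)]; linarith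
    exact mul_le_mul h2 hSdiff (abs_nonneg _) (by linarith)
  have hvar : |distVar p V - distVar p W| ≤ 4 * H * M := by
    have : distVar p V - distVar p W =
        (∑ i, p i * V i ^ 2 - ∑ i, p i * W i ^ 2) -
        ((∑ i, p i * V i) ^ 2 - (∑ i, p i * W i) ^ 2) := by
      simp only [distVar]; ring
    rw [this]
    calc |_ - _| ≤ |∑ i, p i * V i ^ 2 - ∑ i, p i * W i ^ 2| +
          |(∑ i, p i * V i) ^ 2 - (∑ i, p i * W i) ^ 2| := abs_sub _ _
      _ ≤ 4 * H * M := by linarith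
  calc |max 1 (distVar p V) - max 1 (distVar p W)|
      = |max (distVar p V) 1 - max (distVar p W) 1| := by rw [max_comm, max_comm (distVar p W)]
    _ ≤ |distVar p V - distVar p W| := abs_max_sub_max_le_abs _ _ _
    _ ≤ 4 * H * M := hvar
end

section
/- Error of the plug-in variance estimator (Step 3 of the proof of Lemma C.7): Let p be a probability distribution on a finite type ι, H > 0, and V : ι → ℝ with 0 ≤ V(i) ≤ H for all i. Let â, b̂ ∈ ℝ and define the clipped values A := min{max{â, 0}, H²} and B := min{max{b̂, 0}, H}. If |A − Σ_i p_i V(i)²| ≤ ε₁ and |B − Σ_i p_i V(i)| ≤ ε₂, then |max{1, A − B²} − max{1, Var_p(V)}| ≤ ε₁ + 2H·ε₂. -/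
open Finset

/-- Error of the plug-in variance estimator (Step 3 of the proof of Lemma C.7):
with clipped values `A := min{max{â,0}, H²}` and `B := min{max{b̂,0}, H}`, if
`|A − E_p V²| ≤ ε₁` and `|B − E_p V| ≤ ε₂`, then
`|max{1, A − B²} − max{1, Var_p(V)}| ≤ ε₁ + 2Hε₂`. -/
theorem plugin_variance_error
    {ι : Type*} [Fintype ι]
    (p : ι → ℝ) (hpnn : ∀ i, 0 ≤ p i) (hpsum : ∑ i, p i = 1)
    (H : ℝ) (hH : 0 < H)
    (V : ι → ℝ) (hVnn : ∀ i, 0 ≤ V i) (hVle : ∀ i, V i ≤ H)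
    (ahat bhat ε₁ ε₂ : ℝ)
    (h1 : |min (max ahat 0) (H ^ 2) - ∑ i, p i * V i ^ 2| ≤ ε₁)
    (h2 : |min (max bhat 0) H - ∑ i, p i * V i| ≤ ε₂) :
    |max 1 (min (max ahat 0) (H ^ 2) - (min (max bhat 0) H) ^ 2) -
        max 1 (distVar p V)| ≤ ε₁ + 2 * H * ε₂ := by
  set A := min (max ahat 0) (H ^ 2) with hA
  set B := min (max bhat 0) H with hB
  set a := ∑ i, p i * V i ^ 2 with ha
  set b := ∑ i, p i * V i with hb
  have hB0 : 0 ≤ B := le_min (le_max_right _ _) hH.le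
  have hBH : B ≤ H := min_le_right _ _
  have hb0 : 0 ≤ b := Finset.sum_nonneg fun i _ => mul_nonneg (hpnn i) (hVnn i)
  have hbH : b ≤ H := by
    calc b ≤ ∑ i, p i * H := Finset.sum_le_sum fun i _ =>
            mul_le_mul_of_nonneg_left (hVle i) (hpnn i)
    _ = H := by rw [← Finset.sum_mul, hpsum, one_mul]
  have key : |max 1 (A - B ^ 2) - max 1 (distVar p V)| ≤ |A - B ^ 2 - distVar p V| := by
    rw [max_comm 1 (A - B ^ 2), max_comm 1 (distVar p V)]
    exact abs_max_sub_max_le_abs _ _ _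
  refine key.trans ?_
  have : A - B ^ 2 - distVar p V = (A - a) - (B + b) * (B - b) := by
    rw [distVar]; ring
  rw [this]
  have h3 : |(B + b) * (B - b)| ≤ 2 * H * ε₂ := by
    rw [abs_mul]
    have h4 : |B + b| ≤ 2 * H := by
      rw [abs_of_nonneg (by linarith)]; linarith
    exact mul_le_mul h4 h2 (abs_nonneg _) (by linarith)
  calc |(A - a) - (B + b) * (B - b)| ≤ |A - a| + |(B + b) * (B - b)| := abs_sub _ _
  _ ≤ ε₁ + 2 * H * ε₂ := add_le_add h1 h3
end

section
/- Accuracy of the post-processing optimization for private counts (Lemma B.2): Let ι be a finite nonempty type, E > 0, and let n, n' : ι → ℝ and m' ∈ ℝ satisfy n(i) ≥ 0 and |n'(i) − n(i)| ≤ E/2 for all i, and |m' − Σ_i n(i)| ≤ E/2. Let x : ι → ℝ be a minimizer of the objective x ↦ max_i |x(i) − n'(i)| over the feasible set F := { x : x(i) ≥ 0 for all i, and |Σ_i x(i) − m'| ≤ E/2 }. Then |x(i) − n(i)| ≤ E for every i, and |Σ_i x(i) − Σ_i n(i)| ≤ E. -/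
open Finset

/-- Accuracy of the post-processing optimization for private counts (Lemma B.2):
any minimizer `x` of `max_i |x(i) − n'(i)|` over the feasible set
`{x : x ≥ 0, |Σ_i x(i) − m'| ≤ E/2}` satisfies `|x(i) − n(i)| ≤ E` for all `i`
and `|Σ_i x(i) − Σ_i n(i)| ≤ E`. -/
theorem postprocessing_optimization_accuracy
    {ι : Type*} [Fintype ι] [Nonempty ι]
    (E : ℝ) (hE : 0 < E)
    (n n' : ι → ℝ) (m' : ℝ)
    (hn : ∀ i, 0 ≤ n i)
    (hn' : ∀ i, |n' i - n i| ≤ E / 2)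
    (hm' : |m' - ∑ i, n i| ≤ E / 2)
    (x : ι → ℝ)
    (hxnn : ∀ i, 0 ≤ x i)
    (hxsum : |(∑ i, x i) - m'| ≤ E / 2)
    (hxmin : ∀ y : ι → ℝ, (∀ i, 0 ≤ y i) → |(∑ i, y i) - m'| ≤ E / 2 →
      univ.sup' univ_nonempty (fun i => |x i - n' i|) ≤
        univ.sup' univ_nonempty (fun i => |y i - n' i|)) :
    (∀ i, |x i - n i| ≤ E) ∧ |(∑ i, x i) - ∑ i, n i| ≤ E := by
  have hfeas : |(∑ i, n i) - m'| ≤ E / 2 := by rw [abs_sub_comm]; exact hm'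
  have key := hxmin n hn hfeas
  have hsup : univ.sup' univ_nonempty (fun i => |n i - n' i|) ≤ E / 2 := by
    apply Finset.sup'_le
    intro i _
    rw [abs_sub_comm]; exact hn' i
  have hxi : ∀ i, |x i - n' i| ≤ E / 2 := fun i =>
    le_trans (Finset.le_sup' (fun i => |x i - n' i|) (mem_univ i)) (le_trans key hsup)
  constructor
  · intro i
    calc |x i - n i| ≤ |x i - n' i| + |n' i - n i| := abs_sub_le _ _ _
      _ ≤ E / 2 + E / 2 := add_le_add (hxi i) (hn' i)
      _ = E := by ring
  · calc |(∑ i, x i) - ∑ i, n i| ≤ |(∑ i, x i) - m'| + |m' - ∑ i, n i| := abs_sub_le _ _ _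
      _ ≤ E / 2 + E / 2 := add_le_add hxsum hm'
      _ = E := by ring
end

section
/- Noise-matrix error term in variance-weighted ridge regression (deterministic version of Lemma C.5): Let d, K ≥ 1 be integers, and let H > 0, E > 0, L ≥ 0, λ ≥ 0, κ > 0 be reals with K ≥ √2·L/√(d·κ). Let x₁,…,x_K ∈ ℝ^d with ‖x_τ‖₂ ≤ 1, reals σ_τ ≥ 1 and v_τ with |v_τ| ≤ H for each τ, ψ ∈ ℝ^d with ‖ψ‖₂ ≤ L, and φ ∈ ℝ^d with ‖φ‖₂ ≤ 1. Set Â := Σ_{τ=1}^K x_τ x_τᵀ/σ_τ² + λ·I_d, let N be a real symmetric positive semidefinite d×d matrix with ‖N‖ ≤ E, and set Λ̃ := Â + N. If λ_min(Â) ≥ K·κ/(2H²), then |φᵀ(Â⁻¹ − Λ̃⁻¹)(Σ_{τ=1}^K x_τ·v_τ/σ_τ² + ψ)| ≤ 4√2·H⁴·E·√d/(κ^{3/2}·K). -/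
/-!
By the resolvent identity `Â⁻¹ - Λ̃⁻¹ = Â⁻¹ N Λ̃⁻¹`, the quantity equals `(φᵀ Â⁻¹) N (Λ̃⁻¹ b)` with
`b = Σ_τ x_τ v_τ / σ_τ² + ψ`, so it is at most `‖φᵀ Â⁻¹‖ ‖N‖ ‖Λ̃⁻¹ b‖`. Both `Â` and `Λ̃ ⪰ Â`
have quadratic form at least `c = Kκ/(2H²)`, which gives `‖φᵀ Â⁻¹‖ ≤ 1/c` and `‖Λ̃⁻¹ ψ‖ ≤ L/c`.
For `w = Λ̃⁻¹ Σ_τ x_τ v_τ / σ_τ²` a self-normalized argument applies: `s = wᵀ Λ̃ w` equals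
`Σ_τ (v_τ / σ_τ²) x_τᵀ w`, so by Cauchy–Schwarz `s² ≤ H² K Σ_τ (x_τᵀ w)² / σ_τ² ≤ H² K s`,
whence `c ‖w‖² ≤ s ≤ H² K`.
-/

open Matrix

/-- Spectral norm (ℓ2→ℓ2 operator norm) of a real square matrix. -/
noncomputable def specNorm {d : ℕ} (M : Matrix (Fin d) (Fin d) ℝ) : ℝ :=
  ‖(Matrix.toEuclideanCLM (𝕜 := ℝ) M :
      EuclideanSpace ℝ (Fin d) →L[ℝ] EuclideanSpace ℝ (Fin d))‖

/-- The weighted regularized Gram matrix `Â = Σ_τ x_τ x_τᵀ/σ_τ² + λ I`. -/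
noncomputable def gramHat {d K : ℕ} (x : Fin K → Fin d → ℝ) (σ : Fin K → ℝ)
    (lam : ℝ) : Matrix (Fin d) (Fin d) ℝ :=
  (∑ τ, (σ τ ^ 2)⁻¹ • Matrix.vecMulVec (x τ) (x τ)) +
    lam • (1 : Matrix (Fin d) (Fin d) ℝ)

section EuclideanBounds

variable {n : Type*} [Fintype n]

lemma norm_toLp_eq_sqrt_sum_sq (y : n → ℝ) :
    ‖(WithLp.toLp 2 y : EuclideanSpace ℝ n)‖ = √(∑ i, y i ^ 2) := by
  simp [EuclideanSpace.norm_eq]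

lemma abs_dotProduct_le (y z : n → ℝ) :
    |y ⬝ᵥ z| ≤ √(∑ i, y i ^ 2) * √(∑ i, z i ^ 2) := by
  have := abs_real_inner_le_norm (WithLp.toLp 2 y : EuclideanSpace ℝ n) (WithLp.toLp 2 z)
  rwa [EuclideanSpace.inner_toLp_toLp, norm_toLp_eq_sqrt_sum_sq, norm_toLp_eq_sqrt_sum_sq,
    star_trivial, dotProduct_comm] at this

lemma sqrt_sum_sq_add_le (y z : n → ℝ) :
    √(∑ i, (y + z) i ^ 2) ≤ √(∑ i, y i ^ 2) + √(∑ i, z i ^ 2) := by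
  have := norm_add_le (WithLp.toLp 2 y : EuclideanSpace ℝ n) (WithLp.toLp 2 z)
  rwa [← WithLp.toLp_add, norm_toLp_eq_sqrt_sum_sq, norm_toLp_eq_sqrt_sum_sq,
    norm_toLp_eq_sqrt_sum_sq] at this

end EuclideanBounds

lemma abs_dotProduct_mulVec_le_specNorm {d : ℕ} (M : Matrix (Fin d) (Fin d) ℝ)
    (u w : Fin d → ℝ) :
    |u ⬝ᵥ M *ᵥ w| ≤ √(∑ i, u i ^ 2) * specNorm M * √(∑ i, w i ^ 2) := by
  rw [← Matrix.inner_toEuclideanCLM, ← norm_toLp_eq_sqrt_sum_sq, ← norm_toLp_eq_sqrt_sum_sq,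
    mul_assoc]
  exact (abs_real_inner_le_norm _ _).trans
    (mul_le_mul_of_nonneg_left ((Matrix.toEuclideanCLM (𝕜 := ℝ) M).le_opNorm _) (norm_nonneg _))

section Coercive

variable {n : Type*} [Fintype n] {M : Matrix n n ℝ} {c : ℝ}

lemma mul_sqrt_sum_sq_le_of_coercive (hM : ∀ y : n → ℝ, c * ∑ i, y i ^ 2 ≤ y ⬝ᵥ M *ᵥ y)
    (y : n → ℝ) : c * √(∑ i, y i ^ 2) ≤ √(∑ i, (M *ᵥ y) i ^ 2) := by
  have hy : 0 ≤ ∑ i, y i ^ 2 := by positivity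
  rcases (Real.sqrt_nonneg (∑ i, y i ^ 2)).eq_or_lt with h0 | hpos
  · rw [← h0, mul_zero]; positivity
  · refine le_of_mul_le_mul_right ?_ hpos
    calc c * √(∑ i, y i ^ 2) * √(∑ i, y i ^ 2) = c * ∑ i, y i ^ 2 := by
          rw [mul_assoc, Real.mul_self_sqrt hy]
      _ ≤ |y ⬝ᵥ M *ᵥ y| := (hM y).trans (le_abs_self _)
      _ ≤ √(∑ i, (M *ᵥ y) i ^ 2) * √(∑ i, y i ^ 2) := by
          rw [mul_comm]; exact abs_dotProduct_le _ _

lemma isUnit_of_coercive [DecidableEq n] (hc : 0 < c)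
    (hM : ∀ y : n → ℝ, c * ∑ i, y i ^ 2 ≤ y ⬝ᵥ M *ᵥ y) : IsUnit M := by
  refine Matrix.mulVec_injective_iff_isUnit.1 fun y z hyz => ?_
  have hsub := mul_sqrt_sum_sq_le_of_coercive hM (y - z)
  rw [Matrix.mulVec_sub, hyz, sub_self] at hsub
  simp only [Pi.zero_apply, zero_pow two_ne_zero, Finset.sum_const_zero, Real.sqrt_zero] at hsub
  have hsq : ∑ i, (y - z) i ^ 2 = 0 := le_antisymm
    (Real.sqrt_eq_zero'.1 (le_antisymm (nonpos_of_mul_nonpos_right hsub hc) (Real.sqrt_nonneg _)))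
    (by positivity)
  rw [Fintype.sum_eq_zero_iff_of_nonneg (fun _ => sq_nonneg _)] at hsq
  exact sub_eq_zero.1 (funext fun i => pow_eq_zero_iff two_ne_zero |>.1 (congrFun hsq i))

lemma sqrt_sum_sq_inv_mulVec_le [DecidableEq n] (hc : 0 < c)
    (hM : ∀ y : n → ℝ, c * ∑ i, y i ^ 2 ≤ y ⬝ᵥ M *ᵥ y) (z : n → ℝ) :
    √(∑ i, (M⁻¹ *ᵥ z) i ^ 2) ≤ √(∑ i, z i ^ 2) / c := by
  have hMM : M * M⁻¹ = 1 :=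
    M.mul_nonsing_inv ((M.isUnit_iff_isUnit_det).1 (isUnit_of_coercive hc hM))
  have := mul_sqrt_sum_sq_le_of_coercive hM (M⁻¹ *ᵥ z)
  rwa [Matrix.mulVec_mulVec, hMM, Matrix.one_mulVec, mul_comm, ← le_div_iff₀ hc] at this

lemma coercive_transpose (hM : ∀ y : n → ℝ, c * ∑ i, y i ^ 2 ≤ y ⬝ᵥ M *ᵥ y)
    (y : n → ℝ) : c * ∑ i, y i ^ 2 ≤ y ⬝ᵥ Mᵀ *ᵥ y := by
  rw [Matrix.mulVec_transpose, dotProduct_comm, ← Matrix.dotProduct_mulVec]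
  exact hM y

lemma sqrt_sum_sq_vecMul_inv_le [DecidableEq n] (hc : 0 < c)
    (hM : ∀ y : n → ℝ, c * ∑ i, y i ^ 2 ≤ y ⬝ᵥ M *ᵥ y) (z : n → ℝ) :
    √(∑ i, (z ᵥ* M⁻¹) i ^ 2) ≤ √(∑ i, z i ^ 2) / c := by
  rw [← Matrix.mulVec_transpose, Matrix.transpose_nonsing_inv]
  exact sqrt_sum_sq_inv_mulVec_le hc (coercive_transpose hM) z

lemma dotProduct_mulVec_le_add_posSemidef {N : Matrix n n ℝ} (hN : N.PosSemidef) (y : n → ℝ) :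
    y ⬝ᵥ M *ᵥ y ≤ y ⬝ᵥ (M + N) *ᵥ y := by
  rw [Matrix.add_mulVec, dotProduct_add, le_add_iff_nonneg_right]
  simpa using hN.dotProduct_mulVec_nonneg y

end Coercive

lemma dotProduct_gramHat_mulVec {d K : ℕ} (x : Fin K → Fin d → ℝ) (σ : Fin K → ℝ) (lam : ℝ)
    (y : Fin d → ℝ) :
    y ⬝ᵥ gramHat x σ lam *ᵥ y = ∑ τ, (x τ ⬝ᵥ y) ^ 2 / σ τ ^ 2 + lam * ∑ i, y i ^ 2 := by
  simp only [gramHat, Matrix.add_mulVec, Matrix.sum_mulVec, Matrix.smul_mulVec,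
    Matrix.vecMulVec_mulVec, Matrix.one_mulVec, dotProduct_add, dotProduct_sum, dotProduct_smul]
  simp [sq, div_eq_inv_mul, mul_comm, dotProduct]

section SelfNormalized

variable {ι : Type*} [Fintype ι] {H : ℝ} {σ v : ι → ℝ}

lemma sq_sum_div_sq_mul_le (hσ : ∀ τ, 1 ≤ σ τ) (hv : ∀ τ, |v τ| ≤ H) (a : ι → ℝ) :
    (∑ τ, v τ / σ τ ^ 2 * a τ) ^ 2 ≤ H ^ 2 * Fintype.card ι * ∑ τ, a τ ^ 2 / σ τ ^ 2 := by
  have hterm : ∀ τ, (v τ / σ τ) ^ 2 ≤ H ^ 2 := fun τ => by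
    rw [← sq_abs, abs_div, abs_of_pos (zero_lt_one.trans_le (hσ τ))]
    exact pow_le_pow_left₀ (div_nonneg (abs_nonneg _) (zero_le_one.trans (hσ τ)))
      ((div_le_self (abs_nonneg _) (hσ τ)).trans (hv τ)) 2
  calc (∑ τ, v τ / σ τ ^ 2 * a τ) ^ 2 = (∑ τ, v τ / σ τ * (a τ / σ τ)) ^ 2 := by
        congr 1; refine Finset.sum_congr rfl fun τ _ => ?_
        have := (zero_lt_one.trans_le (hσ τ)).ne'
        field_simp
    _ ≤ (∑ τ, (v τ / σ τ) ^ 2) * ∑ τ, (a τ / σ τ) ^ 2 := Finset.sum_mul_sq_le_sq_mul_sq _ _ _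
    _ ≤ H ^ 2 * Fintype.card ι * ∑ τ, a τ ^ 2 / σ τ ^ 2 := by
        simp only [div_pow]
        gcongr
        calc ∑ τ, v τ ^ 2 / σ τ ^ 2 ≤ ∑ _τ : ι, H ^ 2 := Finset.sum_le_sum fun τ _ => by
              simpa [div_pow] using hterm τ
          _ = H ^ 2 * Fintype.card ι := by simp [mul_comm]

lemma dotProduct_mulVec_le_of_mulVec_eq_weighted_sum {n : Type*} [Fintype n]
    {M : Matrix n n ℝ} (x : ι → n → ℝ) (hσ : ∀ τ, 1 ≤ σ τ) (hv : ∀ τ, |v τ| ≤ H)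
    (hMx : ∀ y, ∑ τ, (x τ ⬝ᵥ y) ^ 2 / σ τ ^ 2 ≤ y ⬝ᵥ M *ᵥ y)
    {w : n → ℝ} (hw : M *ᵥ w = ∑ τ, (v τ / σ τ ^ 2) • x τ) :
    w ⬝ᵥ M *ᵥ w ≤ H ^ 2 * Fintype.card ι := by
  set s := w ⬝ᵥ M *ᵥ w
  have hs : s = ∑ τ, v τ / σ τ ^ 2 * (x τ ⬝ᵥ w) := by
    simp only [s, hw, dotProduct_sum, dotProduct_smul, smul_eq_mul, dotProduct_comm w (x _)]
  have hq : 0 ≤ ∑ τ, (x τ ⬝ᵥ w) ^ 2 / σ τ ^ 2 := by positivity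
  have hsq : s ^ 2 ≤ H ^ 2 * Fintype.card ι * s := by
    calc s ^ 2 ≤ H ^ 2 * Fintype.card ι * ∑ τ, (x τ ⬝ᵥ w) ^ 2 / σ τ ^ 2 :=
          hs ▸ sq_sum_div_sq_mul_le hσ hv _
      _ ≤ H ^ 2 * Fintype.card ι * s := by gcongr; exact hMx w
  have hs0 : 0 ≤ s := hq.trans (hMx w)
  have hHK : 0 ≤ H ^ 2 * Fintype.card ι := by positivity
  nlinarith

lemma sqrt_sum_sq_inv_mulVec_weighted_sum_le {n : Type*} [Fintype n] [DecidableEq n]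
    {M : Matrix n n ℝ} {c : ℝ} (hc : 0 < c) (hM : ∀ y : n → ℝ, c * ∑ i, y i ^ 2 ≤ y ⬝ᵥ M *ᵥ y)
    (x : ι → n → ℝ) (hσ : ∀ τ, 1 ≤ σ τ) (hv : ∀ τ, |v τ| ≤ H)
    (hMx : ∀ y, ∑ τ, (x τ ⬝ᵥ y) ^ 2 / σ τ ^ 2 ≤ y ⬝ᵥ M *ᵥ y) :
    √(∑ i, (M⁻¹ *ᵥ ∑ τ, (v τ / σ τ ^ 2) • x τ) i ^ 2) ≤ √(H ^ 2 * Fintype.card ι / c) := by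
  have hdet : IsUnit M.det := M.isUnit_iff_isUnit_det.1 (isUnit_of_coercive hc hM)
  refine Real.sqrt_le_sqrt ((le_div_iff₀' hc).2 ((hM _).trans ?_))
  exact dotProduct_mulVec_le_of_mulVec_eq_weighted_sum x hσ hv hMx
    (by rw [Matrix.mulVec_mulVec, Matrix.mul_nonsing_inv _ hdet, Matrix.one_mulVec])

end SelfNormalized

lemma sum_div_sq_le_dotProduct_gramHat_add_mulVec {d K : ℕ} (x : Fin K → Fin d → ℝ)
    (σ : Fin K → ℝ) {lam : ℝ} (hlam : 0 ≤ lam) {N : Matrix (Fin d) (Fin d) ℝ}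
    (hN : N.PosSemidef) (y : Fin d → ℝ) :
    ∑ τ, (x τ ⬝ᵥ y) ^ 2 / σ τ ^ 2 ≤ y ⬝ᵥ (gramHat x σ lam + N) *ᵥ y := by
  refine le_trans ?_ (dotProduct_mulVec_le_add_posSemidef hN y)
  rw [dotProduct_gramHat_mulVec]
  exact le_add_of_nonneg_right (by positivity)

lemma dotProduct_inv_sub_inv_add_mulVec {n : Type*} [Fintype n] [DecidableEq n]
    {A N : Matrix n n ℝ} (hA : IsUnit A) (hAN : IsUnit (A + N)) (φ b : n → ℝ) :
    φ ⬝ᵥ (A⁻¹ - (A + N)⁻¹) *ᵥ b = (φ ᵥ* A⁻¹) ⬝ᵥ N *ᵥ ((A + N)⁻¹ *ᵥ b) := by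
  rw [Matrix.inv_sub_inv (iff_of_true hA hAN), add_sub_cancel_left, ← Matrix.mulVec_mulVec,
    ← Matrix.mulVec_mulVec, Matrix.dotProduct_mulVec]

lemma weighted_ridge_scalar_bound {d K H E L κ : ℝ} (hd : 1 ≤ d) (hK : 0 < K) (hH : 0 < H)
    (hE : 0 ≤ E) (hκ : 0 < κ) (hKlarge : √2 * L / √(d * κ) ≤ K) :
    E / (K * κ / (2 * H ^ 2)) *
        (√(H ^ 2 * K / (K * κ / (2 * H ^ 2))) + L / (K * κ / (2 * H ^ 2))) ≤
      4 * √2 * H ^ 4 * E * √d / (√(κ ^ 3) * K) := by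
  have hs : 0 < √κ := Real.sqrt_pos.2 hκ
  have ht : 1 ≤ √d := Real.one_le_sqrt.2 hd
  have hs2 : √κ ^ 2 = κ := Real.sq_sqrt hκ.le
  have hq2 : √2 ^ 2 = 2 := Real.sq_sqrt zero_le_two
  have hfirst : √(H ^ 2 * K / (K * κ / (2 * H ^ 2))) = √2 * H ^ 2 / √κ := by
    rw [show H ^ 2 * K / (K * κ / (2 * H ^ 2)) = 2 * (H ^ 2) ^ 2 / κ by field_simp,
      Real.sqrt_div' _ hκ.le, Real.sqrt_mul zero_le_two, Real.sqrt_sq (by positivity)]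
  have hL : √2 * L ≤ K * (√d * √κ) := by
    rwa [Real.sqrt_mul (zero_le_one.trans hd), div_le_iff₀ (by positivity)] at hKlarge
  have hsecond : L / (K * κ / (2 * H ^ 2)) ≤ √2 * H ^ 2 * √d / √κ := by
    rw [div_div_eq_mul_div, div_le_div_iff₀ (by positivity) hs]
    calc L * (2 * H ^ 2) * √κ = √2 * H ^ 2 * √κ * (√2 * L) := by
          linear_combination (-(L * H ^ 2 * √κ)) * hq2
      _ ≤ √2 * H ^ 2 * √κ * (K * (√d * √κ)) := by gcongr
      _ = √2 * H ^ 2 * √d * (K * κ) := by linear_combination (√2 * H ^ 2 * √d * K) * hs2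
  have hκ3 : √(κ ^ 3) = κ * √κ := by
    rw [pow_succ, Real.sqrt_mul (sq_nonneg κ), Real.sqrt_sq hκ.le]
  calc E / (K * κ / (2 * H ^ 2)) *
        (√(H ^ 2 * K / (K * κ / (2 * H ^ 2))) + L / (K * κ / (2 * H ^ 2)))
      ≤ E / (K * κ / (2 * H ^ 2)) * (√2 * H ^ 2 * √d / √κ + √2 * H ^ 2 * √d / √κ) := by
        rw [hfirst]
        refine mul_le_mul_of_nonneg_left (add_le_add ?_ hsecond) (by positivity)
        exact div_le_div_of_nonneg_right (le_mul_of_one_le_right (by positivity) ht) hs.le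
    _ = 4 * √2 * H ^ 4 * E * √d / (√(κ ^ 3) * K) := by
        rw [hκ3]; field_simp; ring

theorem noise_matrix_error_weighted_ridge_general
    {d K : ℕ} (hd : 1 ≤ d) (hK : 1 ≤ K)
    (H E L lam κ : ℝ)
    (hH : 0 < H) (hlam : 0 ≤ lam) (hκ : 0 < κ)
    (hKlarge : Real.sqrt 2 * L / Real.sqrt (d * κ) ≤ (K : ℝ))
    (x : Fin K → Fin d → ℝ)
    (σ : Fin K → ℝ) (hσ : ∀ τ, 1 ≤ σ τ)
    (v : Fin K → ℝ) (hv : ∀ τ, |v τ| ≤ H)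
    (ψ : Fin d → ℝ) (hψ : Real.sqrt (∑ i, ψ i ^ 2) ≤ L)
    (φ : Fin d → ℝ) (hφ : Real.sqrt (∑ i, φ i ^ 2) ≤ 1)
    (N : Matrix (Fin d) (Fin d) ℝ) (hN : N.PosSemidef) (hNE : specNorm N ≤ E)
    (hmin : ∀ y : Fin d → ℝ,
      (K : ℝ) * κ / (2 * H ^ 2) * ∑ i, y i ^ 2 ≤ y ⬝ᵥ (gramHat x σ lam).mulVec y) :
    |φ ⬝ᵥ ((gramHat x σ lam)⁻¹ - (gramHat x σ lam + N)⁻¹).mulVec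
        ((∑ τ, (v τ / σ τ ^ 2) • x τ) + ψ)| ≤
      4 * Real.sqrt 2 * H ^ 4 * E * Real.sqrt d / (Real.sqrt (κ ^ 3) * K) := by
  set A := gramHat x σ lam
  set c : ℝ := K * κ / (2 * H ^ 2)
  have hc : 0 < c := by positivity
  have hΛ (y : Fin d → ℝ) : c * ∑ i, y i ^ 2 ≤ y ⬝ᵥ (A + N) *ᵥ y :=
    (hmin y).trans (dotProduct_mulVec_le_add_posSemidef hN y)
  have hE : 0 ≤ E := (norm_nonneg _).trans hNE
  rw [dotProduct_inv_sub_inv_add_mulVec (isUnit_of_coercive hc hmin) (isUnit_of_coercive hc hΛ),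
    Matrix.mulVec_add]
  refine (abs_dotProduct_mulVec_le_specNorm N _ _).trans (le_trans ?_
    (weighted_ridge_scalar_bound (by exact_mod_cast hd) (by positivity) hH hE hκ hKlarge))
  calc _ ≤ 1 / c * E * (√(H ^ 2 * K / c) + L / c) := by
        gcongr
        · exact norm_nonneg _
        · exact (sqrt_sum_sq_vecMul_inv_le hc hmin φ).trans (by gcongr)
        · refine (sqrt_sum_sq_add_le _ _).trans (add_le_add ?_ ?_)
          · simpa using sqrt_sum_sq_inv_mulVec_weighted_sum_le hc hΛ x hσ hv
              (sum_div_sq_le_dotProduct_gramHat_add_mulVec x σ hlam hN)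
          · exact (sqrt_sum_sq_inv_mulVec_le hc hΛ ψ).trans (by gcongr)
    _ = E / c * (√(H ^ 2 * K / c) + L / c) := by ring

/-- Noise-matrix error term in variance-weighted ridge regression (deterministic
version of Lemma C.5): with `Â = Σ_τ x_τ x_τᵀ/σ_τ² + λ I`, `Λ̃ = Â + N` for a PSD
noise matrix `N` with `‖N‖ ≤ E`, and `λ_min(Â) ≥ Kκ/(2H²)`,
`|φᵀ(Â⁻¹ − Λ̃⁻¹)(Σ_τ x_τ v_τ/σ_τ² + ψ)| ≤ 4√2·H⁴·E·√d/(κ^{3/2}·K)`. -/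
theorem noise_matrix_error_weighted_ridge
    {d K : ℕ} (hd : 1 ≤ d) (hK : 1 ≤ K)
    (H E L lam κ : ℝ)
    (hH : 0 < H) (hE : 0 < E) (hL : 0 ≤ L) (hlam : 0 ≤ lam) (hκ : 0 < κ)
    (hKlarge : Real.sqrt 2 * L / Real.sqrt (d * κ) ≤ (K : ℝ))
    (x : Fin K → Fin d → ℝ) (hx : ∀ τ, Real.sqrt (∑ i, x τ i ^ 2) ≤ 1)
    (σ : Fin K → ℝ) (hσ : ∀ τ, 1 ≤ σ τ)
    (v : Fin K → ℝ) (hv : ∀ τ, |v τ| ≤ H)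
    (ψ : Fin d → ℝ) (hψ : Real.sqrt (∑ i, ψ i ^ 2) ≤ L)
    (φ : Fin d → ℝ) (hφ : Real.sqrt (∑ i, φ i ^ 2) ≤ 1)
    (N : Matrix (Fin d) (Fin d) ℝ) (hN : N.PosSemidef) (hNE : specNorm N ≤ E)
    (hmin : ∀ y : Fin d → ℝ,
      (K : ℝ) * κ / (2 * H ^ 2) * ∑ i, y i ^ 2 ≤ y ⬝ᵥ (gramHat x σ lam).mulVec y) :
    |φ ⬝ᵥ ((gramHat x σ lam)⁻¹ - (gramHat x σ lam + N)⁻¹).mulVec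
        ((∑ τ, (v τ / σ τ ^ 2) • x τ) + ψ)| ≤
      4 * Real.sqrt 2 * H ^ 4 * E * Real.sqrt d / (Real.sqrt (κ ^ 3) * K) :=
  noise_matrix_error_weighted_ridge_general hd hK H E L lam κ hH hlam hκ hKlarge x σ hσ v hv ψ hψ φ
    hφ N hN hNE hmin
end

section
/- Sum of transformed feature norms (inner inequality in the proof of Lemma C.5): Let x₁,…,x_K ∈ ℝ^d, let C be a real symmetric d×d matrix, and let A be a real symmetric positive semidefinite d×d matrix such that A − Σ_{τ=1}^K x_τ x_τᵀ is positive semidefinite. Then Σ_{τ=1}^K ‖C x_τ‖₂ ≤ √(K · d · ‖C A C‖). -/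
/-!
With `S = ∑ τ, x_τ x_τᵀ`, the squared norms `‖C x_τ‖²` add up to `tr (C S Cᵀ)`, which is at most
`tr (C A Cᵀ)` because `C (A - S) Cᵀ` is positive semidefinite, and a trace is at most `d` times the
spectral norm. Cauchy–Schwarz turns the sum of the `K` norms into `√K` times the root of the sum of
their squares.
-/

open Matrix

lemma diag_le_specNorm {d : ℕ} (M : Matrix (Fin d) (Fin d) ℝ) (i : Fin d) :
    M i i ≤ specNorm M := by
  set e : EuclideanSpace ℝ (Fin d) := EuclideanSpace.single i 1
  have he : ‖e‖ = 1 := by simp [e]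
  have hinner : inner ℝ e (Matrix.toEuclideanCLM (𝕜 := ℝ) M e) = M i i := by
    simp [e, EuclideanSpace.inner_single_left, Matrix.mulVec_single]
  calc M i i = inner ℝ e (Matrix.toEuclideanCLM (𝕜 := ℝ) M e) := hinner.symm
    _ ≤ ‖e‖ * ‖Matrix.toEuclideanCLM (𝕜 := ℝ) M e‖ := real_inner_le_norm _ _
    _ ≤ ‖e‖ * (specNorm M * ‖e‖) := by gcongr; exact ContinuousLinearMap.le_opNorm _ e
    _ = specNorm M := by rw [he, one_mul, mul_one]

lemma trace_le_card_mul_specNorm {d : ℕ} (M : Matrix (Fin d) (Fin d) ℝ) :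
    M.trace ≤ d * specNorm M :=
  (Finset.sum_le_sum fun i _ => diag_le_specNorm M i).trans_eq (by simp)

lemma trace_mul_vecMulVec_mul_transpose {m n R : Type*} [Fintype m] [Fintype n]
    [CommSemiring R] (C : Matrix m n R) (v : n → R) :
    (C * vecMulVec v v * Cᵀ).trace = ∑ i, (C *ᵥ v) i ^ 2 := by
  rw [mul_vecMulVec, vecMulVec_mul, vecMul_transpose, trace_vecMulVec, dotProduct]
  simp only [sq]

lemma trace_mul_mul_transpose_le_of_posSemidef_sub {m n : Type*} [Fintype m] [Fintype n]
    {A S : Matrix n n ℝ} (h : (A - S).PosSemidef) (C : Matrix m n ℝ) :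
    (C * S * Cᵀ).trace ≤ (C * A * Cᵀ).trace := by
  have := (h.mul_mul_conjTranspose_same C).trace_nonneg
  rwa [conjTranspose_eq_transpose_of_trivial, Matrix.mul_sub, Matrix.sub_mul, trace_sub,
    sub_nonneg] at this

lemma Real.sum_sqrt_le_sqrt_card_mul_sum {ι : Type*} (s : Finset ι) {f : ι → ℝ}
    (hf : ∀ i, 0 ≤ f i) :
    ∑ i ∈ s, √(f i) ≤ √(s.card * ∑ i ∈ s, f i) := by
  simpa [mul_comm] using Real.sum_sqrt_mul_sqrt_le s hf (g := fun _ => 1) fun _ => zero_le_one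

theorem sum_transformed_feature_norms_general
    {d K : ℕ} (x : Fin K → Fin d → ℝ)
    (C A : Matrix (Fin d) (Fin d) ℝ)
    (hC : C.IsHermitian)
    (hAx : (A - ∑ τ, Matrix.vecMulVec (x τ) (x τ)).PosSemidef) :
    ∑ τ, Real.sqrt (∑ i, (C.mulVec (x τ)) i ^ 2) ≤
      Real.sqrt ((K : ℝ) * d * specNorm (C * A * C)) := by
  have hCt : Cᵀ = C := by simpa [conjTranspose_eq_transpose_of_trivial] using hC.eq
  have hsum : ∑ τ, ∑ i, (C *ᵥ x τ) i ^ 2 = (C * (∑ τ, vecMulVec (x τ) (x τ)) * Cᵀ).trace := by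
    simp only [Matrix.mul_sum, Matrix.sum_mul, trace_sum, trace_mul_vecMulVec_mul_transpose]
  calc ∑ τ, √(∑ i, (C *ᵥ x τ) i ^ 2)
      ≤ √(K * ∑ τ, ∑ i, (C *ᵥ x τ) i ^ 2) := by
        simpa using Real.sum_sqrt_le_sqrt_card_mul_sum Finset.univ
          (f := fun τ => ∑ i, (C *ᵥ x τ) i ^ 2) fun τ => by positivity
    _ ≤ √(K * (C * A * Cᵀ).trace) := by
        rw [hsum]
        gcongr
        exact trace_mul_mul_transpose_le_of_posSemidef_sub hAx C
    _ ≤ √(K * (d * specNorm (C * A * C))) := by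
        rw [hCt]
        gcongr
        exact trace_le_card_mul_specNorm _
    _ = √(K * d * specNorm (C * A * C)) := by rw [← mul_assoc]

/-- Sum of transformed feature norms (inner inequality in the proof of Lemma C.5):
if `C` is symmetric and `A` is PSD with `A − Σ_τ x_τ x_τᵀ` PSD, then
`Σ_τ ‖C x_τ‖₂ ≤ √(K·d·‖C A C‖)`. -/
theorem sum_transformed_feature_norms
    {d K : ℕ} (x : Fin K → Fin d → ℝ)
    (C A : Matrix (Fin d) (Fin d) ℝ)
    (hC : C.IsHermitian) (hA : A.PosSemidef)
    (hAx : (A - ∑ τ, Matrix.vecMulVec (x τ) (x τ)).PosSemidef) :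
    ∑ τ, Real.sqrt (∑ i, (C.mulVec (x τ)) i ^ 2) ≤
      Real.sqrt ((K : ℝ) * d * specNorm (C * A * C)) :=
  sum_transformed_feature_norms_general x C A hC hAx
end

section
/- Euclidean norm bound for a Gaussian noise vector (part of Lemma C.3): Let d ≥ 1 be an integer, s > 0, and δ ∈ (0,1). Let Y₁,…,Y_d be independent real-valued random variables, each with the Gaussian distribution of mean 0 and variance s², and let Y := (Y₁,…,Y_d) ∈ ℝ^d. Then the probability that ‖Y‖₂ > s·√(2·d·log(2d/δ)) is at most δ. -/
open MeasureTheory ProbabilityTheory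

/-!
A union bound over the coordinates: if `‖Y‖₂ > √d · a` then some `|Yᵢ| ≥ a`, and by the
Chernoff bound for the sub-Gaussian variable `Yᵢ ~ N(0, s²)` each of these events has
probability at most `2 exp (-a² / (2 s²))`. With `a = s √(2 log (2d/δ))` this is `δ / d`.
-/

open Real
open scoped NNReal ENNReal

namespace ProbabilityTheory

variable {Ω : Type*} [MeasurableSpace Ω] {μ : Measure Ω} {X : Ω → ℝ}

lemma hasSubgaussianMGF_id_gaussianReal (v : ℝ≥0) :
    HasSubgaussianMGF id v (gaussianReal 0 v) where
  integrable_exp_mul := integrable_exp_mul_gaussianReal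
  mgf_le t := by simp [mgf_id_gaussianReal]

lemma HasSubgaussianMGF.measureReal_abs_ge_le {c : ℝ≥0} (h : HasSubgaussianMGF X c μ) {ε : ℝ} (hε : 0 ≤ ε) :
    μ.real {ω | ε ≤ |X ω|} ≤ 2 * exp (-ε ^ 2 / (2 * c)) := by
  have hsplit : {ω | ε ≤ |X ω|} = {ω | ε ≤ X ω} ∪ {ω | ε ≤ (-X) ω} := by
    ext ω
    simp [le_abs]
  calc μ.real {ω | ε ≤ |X ω|}
      ≤ μ.real {ω | ε ≤ X ω} + μ.real {ω | ε ≤ (-X) ω} := hsplit ▸ measureReal_union_le _ _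
    _ ≤ exp (-ε ^ 2 / (2 * c)) + exp (-ε ^ 2 / (2 * c)) :=
        add_le_add (h.measure_ge_le hε) (h.neg.measure_ge_le hε)
    _ = 2 * exp (-ε ^ 2 / (2 * c)) := (two_mul _).symm

lemma measure_abs_ge_le_of_map_eq_gaussianReal {v : ℝ≥0} (hX : μ.map X = gaussianReal 0 v)
    {ε : ℝ} (hε : 0 ≤ ε) :
    μ {ω | ε ≤ |X ω|} ≤ ENNReal.ofReal (2 * exp (-ε ^ 2 / (2 * v))) := by
  have hXm : AEMeasurable X μ := .of_map_ne_zero (hX ▸ IsProbabilityMeasure.ne_zero _)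
  have hset : MeasurableSet {x : ℝ | ε ≤ |x|} := measurableSet_le measurable_const measurable_abs
  have hlaw : μ {ω | ε ≤ |X ω|} = gaussianReal 0 v {x | ε ≤ |x|} := by
    rw [← hX, Measure.map_apply_of_aemeasurable hXm hset]
    rfl
  rw [hlaw, ← ofReal_measureReal]
  exact ENNReal.ofReal_le_ofReal ((hasSubgaussianMGF_id_gaussianReal v).measureReal_abs_ge_le hε)

end ProbabilityTheory

lemma exists_le_abs_of_sqrt_card_mul_lt_sqrt_sum_sq {ι : Type*} [Fintype ι] {x : ι → ℝ}
    {a : ℝ} (ha : 0 ≤ a) (h : √(Fintype.card ι) * a < √(∑ i, x i ^ 2)) : ∃ i, a ≤ |x i| := by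
  by_contra! hx
  have hsum : ∑ i, x i ^ 2 ≤ Fintype.card ι * a ^ 2 := by
    simpa using Finset.sum_le_card_nsmul Finset.univ _ _ fun i _ =>
      sq_le_sq' (abs_lt.mp (hx i)).1.le (abs_lt.mp (hx i)).2.le
  have hle : √(∑ i, x i ^ 2) ≤ √(Fintype.card ι) * a := by
    rw [← sqrt_sq ha, ← sqrt_mul (Nat.cast_nonneg _)]
    exact sqrt_le_sqrt hsum
  exact hle.not_gt h

lemma exp_neg_sq_mul_sqrt_two_log_le {s x : ℝ} (hs : s ≠ 0) (hx : 0 < x) :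
    exp (-(s * √(2 * log x)) ^ 2 / (2 * s ^ 2)) ≤ x⁻¹ := calc
  exp (-(s * √(2 * log x)) ^ 2 / (2 * s ^ 2)) ≤ exp (-log x) := by
    gcongr
    rw [mul_pow, sq_sqrt', div_le_iff₀ (by positivity)]
    nlinarith [le_max_left (2 * log x) 0, sq_nonneg s]
  _ = x⁻¹ := by rw [exp_neg, exp_log hx]

theorem gaussian_vector_norm_bound_general
    {Ω : Type*} [MeasureSpace Ω]
    (d : ℕ)
    (s δ : ℝ) (hs : 0 < s) (hδ0 : 0 < δ)
    (Y : Fin d → Ω → ℝ)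
    (hdist : ∀ i, Measure.map (Y i) ℙ = gaussianReal 0 ⟨s ^ 2, sq_nonneg s⟩) :
    ℙ {ω | s * Real.sqrt (2 * d * Real.log (2 * d / δ)) <
        Real.sqrt (∑ i, (Y i ω) ^ 2)} ≤ ENNReal.ofReal δ := by
  set a := s * √(2 * log (2 * d / δ))
  have hsub : {ω | s * √(2 * d * log (2 * d / δ)) < √(∑ i, Y i ω ^ 2)} ⊆
      ⋃ i, {ω | a ≤ |Y i ω|} := by
    intro ω hω
    have hthreshold : s * √(2 * d * log (2 * d / δ)) = √(Fintype.card (Fin d)) * a := by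
      rw [Fintype.card_fin, mul_assoc 2, mul_left_comm 2, sqrt_mul (Nat.cast_nonneg d)]
      ring
    rw [Set.mem_ofPred_eq, hthreshold] at hω
    simpa using exists_le_abs_of_sqrt_card_mul_lt_sqrt_sum_sq (by positivity) hω
  have hcoord : ∀ i, ℙ {ω | a ≤ |Y i ω|} ≤ ENNReal.ofReal δ / d := fun i => by
    have hd : (0 : ℝ) < d := by exact_mod_cast i.pos
    calc ℙ {ω | a ≤ |Y i ω|} ≤ ENNReal.ofReal (2 * exp (-a ^ 2 / (2 * s ^ 2))) :=
          measure_abs_ge_le_of_map_eq_gaussianReal (hdist i) (by positivity)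
      _ ≤ ENNReal.ofReal (2 * (2 * d / δ)⁻¹) := by
          gcongr
          exact exp_neg_sq_mul_sqrt_two_log_le hs.ne' (by positivity)
      _ = ENNReal.ofReal δ / d := by
          rw [inv_div, mul_div_assoc', mul_div_mul_left _ _ two_ne_zero,
            ENNReal.ofReal_div_of_pos hd, ENNReal.ofReal_natCast]
  calc ℙ {ω | s * √(2 * d * log (2 * d / δ)) < √(∑ i, Y i ω ^ 2)}
      ≤ ∑ i, ℙ {ω | a ≤ |Y i ω|} := (measure_mono hsub).trans (measure_iUnion_fintype_le _ _)
    _ ≤ ∑ _i : Fin d, ENNReal.ofReal δ / d := Finset.sum_le_sum fun i _ => hcoord i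
    _ ≤ ENNReal.ofReal δ := by simpa using ENNReal.mul_div_le

/-- Euclidean norm bound for a Gaussian noise vector (part of Lemma C.3): if
`Y₁,…,Y_d` are independent `N(0, s²)` random variables, then with probability at
least `1 − δ`, `‖Y‖₂ ≤ s·√(2·d·log(2d/δ))`. -/
theorem gaussian_vector_norm_bound
    {Ω : Type*} [MeasureSpace Ω] [IsProbabilityMeasure (ℙ : Measure Ω)]
    (d : ℕ) (hd : 1 ≤ d)
    (s δ : ℝ) (hs : 0 < s) (hδ0 : 0 < δ) (hδ1 : δ < 1)
    (Y : Fin d → Ω → ℝ)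
    (hmeas : ∀ i, Measurable (Y i))
    (hindep : iIndepFun Y ℙ)
    (hdist : ∀ i, Measure.map (Y i) ℙ = gaussianReal 0 ⟨s ^ 2, sq_nonneg s⟩) :
    ℙ {ω | s * Real.sqrt (2 * d * Real.log (2 * d / δ)) <
        Real.sqrt (∑ i, (Y i ω) ^ 2)} ≤ ENNReal.ofReal δ :=
  gaussian_vector_norm_bound_general d s δ hs hδ0 Y hdist
end
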